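/- arXiv:math/0610988 — 5 statements merged into one kernel-verified Lean document; each statement's English description precedes it below -/
import Mathlib

section
/- Let X be a Polish space and E an equivalence relation on X whose graph is a σ-compact (Kσ) subset of X × X, i.e., a union of countably many compact sets. Then E is Borel reducible to ℓ∞. -/
/-- Borel reducibility: a Borel-measurable map `θ` with `E x x' ↔ F (θ x) (θ x')`. -/
def BorelReducible {X Y : Type*} [TopologicalSpace X] [TopologicalSpace Y]
    (E : X → X → Prop) (F : Y → Y → Prop) : Prop :=
  ∃ θ : X → Y, @Measurable X Y (borel X) (borel Y) θ ∧
    ∀ x x' : X, E x x' ↔ F (θ x) (θ x')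

/-- The `ℓ∞` equivalence relation on `ℝ^ℕ`: `x ∼ y` iff the differences are bounded. -/
def linftyRel (x y : ℕ → ℝ) : Prop := ∃ C : ℝ, ∀ n : ℕ, |x n - y n| ≤ C

/-!
Write the graph of `E` as an increasing union of compact symmetric relations `L n` with
`L n ○ L n ⊆ L (n + 1)`, and fix closed sets `V k` such that every neighbourhood of every point
contains some `V k ∋ x` with arbitrarily large `k`. Send `x` to the sequence whose `k`-th term is
the least `n` with `x ∈ (L n).image (V k)`, truncated at `k`. If `x` and `x'` are `L N`-related,
the composition rule moves each term by at most `N + 1`. If they are not `E`-related, then for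
every `n` some `V k` with `k > n` contains `x` but misses the closed set of points `L n`-related
to `x'`, so the `k`-th term is `≤ r` at `x`, where `(x, x) ∈ L r`, and `> n` at `x'`.
-/

open SetRel Filter Topology

section Compactness

variable {α β γ : Type*} [TopologicalSpace α] [TopologicalSpace β] [TopologicalSpace γ]

theorem IsCompact.setRel_comp [T2Space β] {R : SetRel α β} {S : SetRel β γ}
    (hR : IsCompact R) (hS : IsCompact S) : IsCompact (R ○ S) := by
  have hRS : R ○ S = (fun q : (α × β) × (β × γ) => (q.1.1, q.2.2)) ''
      (R ×ˢ S ∩ {q | q.1.2 = q.2.1}) := by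
    ext ⟨a, c⟩
    constructor
    · rintro ⟨b, hab, hbc⟩
      exact ⟨((a, b), (b, c)), ⟨⟨hab, hbc⟩, rfl⟩, rfl⟩
    · rintro ⟨⟨⟨a', b⟩, ⟨b', c'⟩⟩, ⟨⟨hab, hbc⟩, rfl : b = b'⟩, h⟩
      obtain ⟨rfl, rfl⟩ := Prod.mk.inj h
      exact ⟨b, hab, hbc⟩
  rw [hRS]
  exact ((hR.prod hS).inter_right (isClosed_eq (by fun_prop) (by fun_prop))).image (by fun_prop)

theorem IsCompact.setRel_inv {R : SetRel α β} (hR : IsCompact R) : IsCompact R.inv := by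
  rw [SetRel.inv, ← Set.image_swap_eq_preimage_swap]
  exact hR.image continuous_swap

theorem IsCompact.setRel_image {R : SetRel α β} (hR : IsCompact R) {s : Set α} (hs : IsClosed s) :
    IsCompact (R.image s) := by
  have hRs : R.image s = Prod.snd '' (R ∩ Prod.fst ⁻¹' s) := by
    ext b
    constructor
    · rintro ⟨a, ha, hab⟩
      exact ⟨(a, b), ⟨hab, ha⟩, rfl⟩
    · rintro ⟨⟨a, b⟩, ⟨hab, ha⟩, rfl⟩
      exact ⟨a, ha, hab⟩
  rw [hRs]
  exact (hR.inter_right (hs.preimage continuous_fst)).image continuous_snd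

end Compactness

theorem exists_seq_isClosed_frequently_subset_nhds (X : Type*) [TopologicalSpace X]
    [RegularSpace X] [SecondCountableTopology X] :
    ∃ V : ℕ → Set X, (∀ k, IsClosed (V k)) ∧ ∀ x, ∀ U ∈ 𝓝 x, ∃ᶠ k in atTop, x ∈ V k ∧ V k ⊆ U := by
  obtain ⟨B, hBc, -, hB⟩ := TopologicalSpace.exists_countable_basis X
  obtain ⟨b, hb⟩ := (hBc.insert ∅).exists_eq_range (Set.insert_nonempty _ _)
  -- every basic set is enumerated infinitely often, as `b (Nat.pair i j).unpair.1` for all `j`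
  refine ⟨fun k => closure (b k.unpair.1), fun _ => isClosed_closure,
    fun x U hU => frequently_atTop.2 fun m => ?_⟩
  obtain ⟨t, htB, hxt, htU⟩ := hB.exists_closure_subset hU
  obtain ⟨i, rfl⟩ : t ∈ Set.range b := hb ▸ Set.mem_insert_of_mem _ htB
  exact ⟨Nat.pair i m, Nat.right_le_pair i m, by simpa using subset_closure hxt, by simpa using htU⟩

section

variable {X : Type*}

section CompClosureSeq

def compClosureSeq (K : ℕ → SetRel X X) : ℕ → SetRel X X
  | 0 => K 0 ∪ (K 0).inv
  | n + 1 => compClosureSeq K n ∪ (K (n + 1) ∪ (K (n + 1)).inv) ∪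
      (compClosureSeq K n ○ compClosureSeq K n)

variable (K : ℕ → SetRel X X)

theorem compClosureSeq_succ (n : ℕ) : compClosureSeq K (n + 1) =
    compClosureSeq K n ∪ (K (n + 1) ∪ (K (n + 1)).inv) ∪
      (compClosureSeq K n ○ compClosureSeq K n) :=
  rfl

theorem monotone_compClosureSeq : Monotone (compClosureSeq K) :=
  monotone_nat_of_le_succ fun n => by
    rw [compClosureSeq_succ]
    exact Set.subset_union_left.trans Set.subset_union_left

theorem subset_compClosureSeq : ∀ n, K n ⊆ compClosureSeq K n
  | 0 => Set.subset_union_left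
  | n + 1 => by
    rw [compClosureSeq_succ]
    exact Set.subset_union_left.trans (Set.subset_union_right.trans Set.subset_union_left)

theorem comp_compClosureSeq_subset (n : ℕ) :
    compClosureSeq K n ○ compClosureSeq K n ⊆ compClosureSeq K (n + 1) := by
  rw [compClosureSeq_succ]
  exact Set.subset_union_right

theorem isSymm_compClosureSeq (n : ℕ) : (compClosureSeq K n).IsSymm := by
  rw [← inv_eq_self_iff]
  induction n with
  | zero => exact Set.union_comm _ _
  | succ n ih =>
    rw [compClosureSeq_succ]
    change (compClosureSeq K n).inv ∪ ((K (n + 1)).inv ∪ (K (n + 1)).inv.inv) ∪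
      (compClosureSeq K n ○ compClosureSeq K n).inv = _
    rw [inv_inv, inv_comp, ih, Set.union_comm (K (n + 1)).inv]

theorem isCompact_compClosureSeq [TopologicalSpace X] [T2Space X] (hK : ∀ n, IsCompact (K n)) :
    ∀ n, IsCompact (compClosureSeq K n)
  | 0 => (hK 0).union (hK 0).setRel_inv
  | n + 1 =>
    have ih := isCompact_compClosureSeq hK n
    (ih.union ((hK _).union (hK _).setRel_inv)).union (ih.setRel_comp ih)

theorem iUnion_compClosureSeq {R : SetRel X X} [R.IsSymm] [R.IsTrans] (hK : ⋃ n, K n = R) :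
    ⋃ n, compClosureSeq K n = R := by
  have hKR : ∀ n, K n ⊆ R := fun n => hK ▸ Set.subset_iUnion K n
  have hKR' : ∀ n, (K n).inv ⊆ R := fun n => (inv_mono (hKR n)).trans (inv_eq_self R).le
  refine subset_antisymm (Set.iUnion_subset fun n => ?_)
    (hK ▸ Set.iUnion_mono (subset_compClosureSeq K))
  induction n with
  | zero => exact Set.union_subset (hKR 0) (hKR' 0)
  | succ n ih =>
    exact Set.union_subset (Set.union_subset ih (Set.union_subset (hKR _) (hKR' _)))
      ((comp_subset_comp ih ih).trans comp_subset_self)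

end CompClosureSeq

section HitLevel

open Classical in
noncomputable def hitLevel (L : ℕ → SetRel X X) (V : Set X) (m : ℕ) (x : X) : ℕ :=
  Nat.find (p := fun n => n = m ∨ x ∈ (L n).image V) ⟨m, .inl rfl⟩

variable {L : ℕ → SetRel X X} {V : Set X} {m n N : ℕ} {x x' y : X}

theorem hitLevel_le_cap : hitLevel L V m x ≤ m := by
  classical
  exact Nat.find_min' _ (.inl rfl)

theorem hitLevel_le (hy : y ∈ V) (hyx : (y, x) ∈ L n) : hitLevel L V m x ≤ n := by
  classical
  exact Nat.find_min' _ (.inr ⟨y, hy, hyx⟩)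

theorem mem_image_hitLevel (h : hitLevel L V m x < m) : x ∈ (L (hitLevel L V m x)).image V := by
  classical
  exact (Nat.find_spec (p := fun n => n = m ∨ x ∈ (L n).image V) ⟨m, .inl rfl⟩).resolve_left h.ne

theorem lt_hitLevel (hL : Monotone L) (hn : n < m) (hx : x ∉ (L n).image V) :
    n < hitLevel L V m x := by
  classical
  refine (Nat.lt_find_iff _ n).2 fun j hj => not_or.2 ⟨by omega, fun hxj => hx ?_⟩
  exact image_subset_image_left (hL hj) hxj

theorem hitLevel_le_add (hL : Monotone L) (hcomp : ∀ n, L n ○ L n ⊆ L (n + 1))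
    (hxx' : (x, x') ∈ L N) : hitLevel L V m x' ≤ hitLevel L V m x + (N + 1) := by
  rcases hitLevel_le_cap.lt_or_eq with hlt | heq
  · obtain ⟨y, hy, hyx⟩ := mem_image_hitLevel hlt
    set M := max (hitLevel L V m x) N
    have hyx' : (y, x') ∈ L (M + 1) :=
      hcomp M ⟨x, hL (le_max_left _ _) hyx, hL (le_max_right _ _) hxx'⟩
    exact (hitLevel_le hy hyx').trans (by omega)
  · exact hitLevel_le_cap.trans (by omega)

theorem measurable_hitLevel [TopologicalSpace X] [T2Space X] [MeasurableSpace X]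
    [OpensMeasurableSpace X] (hL : ∀ n, IsCompact (L n)) (hV : IsClosed V) :
    Measurable (hitLevel L V m) := by
  classical
  refine measurable_find _ fun n => ?_
  rw [Set.ofPred_or]
  exact (MeasurableSet.const _).union ((hL n).setRel_image hV).measurableSet

end HitLevel

section Reduction

variable {L : ℕ → SetRel X X} {V : ℕ → Set X} {x x' : X}

theorem linftyRel_hitLevel (hL : Monotone L) (hsymm : ∀ n, (L n).IsSymm)
    (hcomp : ∀ n, L n ○ L n ⊆ L (n + 1)) {N : ℕ} (hxx' : (x, x') ∈ L N) :
    linftyRel (fun k => (hitLevel L (V k) k x : ℝ)) (fun k => hitLevel L (V k) k x') := by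
  have hle {a b : X} (hab : (a, b) ∈ L N) (k : ℕ) :
      (hitLevel L (V k) k b : ℝ) - hitLevel L (V k) k a ≤ N + 1 := by
    rw [sub_le_iff_le_add']
    exact_mod_cast hitLevel_le_add hL hcomp hab
  exact ⟨N + 1, fun k => abs_sub_le_iff.2 ⟨hle ((hsymm N).symm _ _ hxx') k, hle hxx' k⟩⟩

theorem exists_mem_of_linftyRel_hitLevel [TopologicalSpace X] (hL : Monotone L)
    (hclosed : ∀ n, IsClosed (L n)) (hV : ∀ x, ∀ U ∈ 𝓝 x, ∃ᶠ k in atTop, x ∈ V k ∧ V k ⊆ U)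
    {r : ℕ} (hx : (x, x) ∈ L r)
    (h : linftyRel (fun k => (hitLevel L (V k) k x : ℝ)) (fun k => hitLevel L (V k) k x')) :
    ∃ n, (x, x') ∈ L n := by
  obtain ⟨C, hC⟩ := h
  by_contra! hxx'
  set n := r + ⌈C⌉₊ + 1
  have hD : {y | (y, x') ∈ L n}ᶜ ∈ 𝓝 x :=
    ((hclosed n).preimage (by fun_prop)).isOpen_compl.mem_nhds (hxx' n)
  obtain ⟨k, hnk, hxk, hkD⟩ := ((eventually_gt_atTop n).and_frequently (hV x _ hD)).exists
  have hθx : hitLevel L (V k) k x ≤ r := hitLevel_le hxk hx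
  have hθx' : n < hitLevel L (V k) k x' :=
    lt_hitLevel hL hnk fun ⟨y, hy, hyx'⟩ => hkD hy hyx'
  have hCk := (abs_sub_le_iff.1 (hC k)).2
  have hθx_real : (hitLevel L (V k) k x : ℝ) ≤ r := by exact_mod_cast hθx
  have hθx'_real : (n : ℝ) + 1 ≤ hitLevel L (V k) k x' := by exact_mod_cast hθx'
  have hn : (n : ℝ) = r + ⌈C⌉₊ + 1 := by push_cast [n]; ring
  linarith [Nat.le_ceil C]

theorem borelReducible_iUnion_linftyRel [TopologicalSpace X] [T3Space X]
    [SecondCountableTopology X] {L : ℕ → SetRel X X} (hc : ∀ n, IsCompact (L n))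
    (hL : Monotone L) (hsymm : ∀ n, (L n).IsSymm) (hcomp : ∀ n, L n ○ L n ⊆ L (n + 1))
    (hrefl : ∀ x, ∃ n, (x, x) ∈ L n) :
    BorelReducible (fun x y => (x, y) ∈ ⋃ n, L n) linftyRel := by
  obtain ⟨V, hVc, hV⟩ := exists_seq_isClosed_frequently_subset_nhds X
  let := borel X
  have : BorelSpace X := ⟨rfl⟩
  refine ⟨fun x k => hitLevel L (V k) k x, ?_, fun x x' => ⟨fun h => ?_, fun h => ?_⟩⟩
  · rw [← BorelSpace.measurable_eq (α := ℕ → ℝ)]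
    exact measurable_pi_lambda _ fun k =>
      measurable_from_nat.comp (measurable_hitLevel hc (hVc k))
  · obtain ⟨N, hN⟩ := Set.mem_iUnion.1 h
    exact linftyRel_hitLevel hL hsymm hcomp hN
  · obtain ⟨r, hr⟩ := hrefl x
    exact Set.mem_iUnion.2 (exists_mem_of_linftyRel_hitLevel hL (fun n => (hc n).isClosed) hV hr h)

end Reduction

end

/-- Rosendal: every equivalence relation on a Polish space whose graph
is σ-compact (a countable union of compact subsets of `X × X`) is Borel reducible
to `ℓ∞`. -/
theorem ksigma_reducible_to_linfty
    {X : Type*} [TopologicalSpace X] [PolishSpace X]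
    (E : X → X → Prop) (hE : Equivalence E)
    (hKsigma : ∃ K : ℕ → Set (X × X), (∀ n, IsCompact (K n)) ∧
      {p : X × X | E p.1 p.2} = ⋃ n, K n) :
    BorelReducible E linftyRel := by
  obtain ⟨K, hKc, hKE⟩ := hKsigma
  have : SetRel.IsSymm {p : X × X | E p.1 p.2} := ⟨fun _ _ => hE.symm⟩
  have : SetRel.IsTrans {p : X × X | E p.1 p.2} := ⟨fun _ _ _ => hE.trans⟩
  have hL : ⋃ n, compClosureSeq K n = {p | E p.1 p.2} := iUnion_compClosureSeq K hKE.symm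
  have hrefl : ∀ x, ∃ n, (x, x) ∈ compClosureSeq K n := fun x =>
    Set.mem_iUnion.1 (hL ▸ hE.refl x)
  have h := borelReducible_iUnion_linftyRel (isCompact_compClosureSeq K hKc)
    (monotone_compClosureSeq K) (isSymm_compClosureSeq K) (comp_compClosureSeq_subset K) hrefl
  rw [hL] at h
  exact h
end

section
/- For every Borel equivalence relation E on a Polish space there exists a Borel ideal I on ℕ such that E is Borel reducible to E_I. -/
set_option synthInstance.maxHeartbeats 1000000
set_option maxHeartbeats 1600000

open MeasureTheory



/-- An ideal on `ℕ`, with subsets of `ℕ` identified with their characteristic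
functions in Cantor space: contains `∅`, closed under subsets and (finite) unions. -/
def IsIdeal (I : Set (ℕ → Bool)) : Prop :=
  (fun _ => false) ∈ I ∧
  (∀ x y : ℕ → Bool, y ∈ I → (∀ n, x n = true → y n = true) → x ∈ I) ∧
  (∀ x y : ℕ → Bool, x ∈ I → y ∈ I → (fun n => x n || y n) ∈ I)

/-- The equivalence relation induced by an ideal: `x ∼ y` iff `x Δ y ∈ I`. -/
def EI (I : Set (ℕ → Bool)) (x y : ℕ → Bool) : Prop := (fun n => x n != y n) ∈ I

namespace RosendalAux

instance polishSpacePi {ι : Type*} [Countable ι] {Y : ι → Type*} [∀ i, TopologicalSpace (Y i)]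
    [∀ i, PolishSpace (Y i)] : PolishSpace (∀ i, Y i) := PolishSpace.mk

instance polishSpaceProd {Y Z : Type*} [TopologicalSpace Y] [TopologicalSpace Z]
    [PolishSpace Y] [PolishSpace Z] : PolishSpace (Y × Z) := PolishSpace.mk

/-- sup of a finite tuple of characteristic functions. -/
def usup (l : ℕ) (w : Fin l → (ℕ → Bool)) : ℕ → Bool := fun n => decide (∃ i, w i n = true)

/-- pointwise order on characteristic functions. -/
def le01 (x y : ℕ → Bool) : Prop := ∀ n, x n = true → y n = true

lemma le01_refl (x : ℕ → Bool) : le01 x x := fun _ h => h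

lemma le01_trans {x y z : ℕ → Bool} (h1 : le01 x y) (h2 : le01 y z) : le01 x z :=
  fun n hn => h2 n (h1 n hn)

lemma usup_eq_true {l : ℕ} {w : Fin l → ℕ → Bool} {n : ℕ} :
    usup l w n = true ↔ ∃ i, w i n = true := by simp [usup]

/-- `cov S z` : `z` is covered by a finite union of elements of `S`. -/
def cov (S : Set (ℕ → Bool)) (z : ℕ → Bool) : Prop :=
  ∃ l, ∃ w : Fin l → (ℕ → Bool), (∀ i, w i ∈ S) ∧ le01 z (usup l w)

lemma cov_mono {S S' : Set (ℕ → Bool)} (h : S ⊆ S') {z} (hz : cov S z) : cov S' z := by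
  obtain ⟨l, w, hw, hle⟩ := hz
  exact ⟨l, w, fun i => h (hw i), hle⟩

lemma cov_of_mem {S : Set (ℕ → Bool)} {z} (hz : z ∈ S) : cov S z :=
  ⟨1, fun _ => z, fun _ => hz, fun n hn => usup_eq_true.2 ⟨0, hn⟩⟩

lemma cov_of_le01 {S : Set (ℕ → Bool)} {z z'} (hz : cov S z) (h : le01 z' z) : cov S z' := by
  obtain ⟨l, w, hw, hle⟩ := hz
  exact ⟨l, w, hw, le01_trans h hle⟩

lemma cov_bot (S : Set (ℕ → Bool)) : cov S (fun _ => false) :=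
  ⟨0, Fin.elim0, fun i => i.elim0, fun n hn => by simp at hn⟩

lemma cov_join {S : Set (ℕ → Bool)} {x y} (hx : cov S x) (hy : cov S y) :
    cov S (fun n => x n || y n) := by
  obtain ⟨l, w, hw, hle⟩ := hx
  obtain ⟨l', w', hw', hle'⟩ := hy
  refine ⟨l + l', Fin.append w w', ?_, ?_⟩
  · intro i
    refine Fin.addCases (fun j => ?_) (fun j => ?_) i
    · rw [Fin.append_left]; exact hw j
    · rw [Fin.append_right]; exact hw' j
  · intro n hn
    rcases Bool.or_eq_true_iff.1 hn with h | h
    · obtain ⟨i, hi⟩ := usup_eq_true.1 (hle n h)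
      exact usup_eq_true.2 ⟨Fin.castAdd l' i, by rwa [Fin.append_left]⟩
    · obtain ⟨i, hi⟩ := usup_eq_true.1 (hle' n h)
      exact usup_eq_true.2 ⟨Fin.natAdd l i, by rwa [Fin.append_right]⟩

lemma cov_usup {S : Set (ℕ → Bool)} : ∀ (l : ℕ) (w : Fin l → ℕ → Bool),
    (∀ i, cov S (w i)) → cov S (usup l w)
  | 0, w, _ => cov_of_le01 (cov_bot S) (fun n hn => by
      obtain ⟨i, _⟩ := usup_eq_true.1 hn; exact i.elim0)
  | (l + 1), w, h => by
      have ht := cov_usup l (fun i => w i.succ) (fun i => h i.succ)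
      refine cov_of_le01 (cov_join (h 0) ht) ?_
      intro n hn
      obtain ⟨i, hi⟩ := usup_eq_true.1 hn
      refine Fin.cases ?_ (fun j hj => ?_) i hi
      · intro h0; exact Bool.or_eq_true_iff.2 (Or.inl h0)
      · exact Bool.or_eq_true_iff.2 (Or.inr (usup_eq_true.2 ⟨j, hj⟩))

lemma cov_idem {S : Set (ℕ → Bool)} {z : ℕ → Bool} (h : cov {z | cov S z} z) : cov S z := by
  obtain ⟨l, w, hw, hle⟩ := h
  exact cov_of_le01 (cov_usup l w hw) hle

/-! ### The independent family coding -/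

/-- The coding map giving a continuously parametrized independent family of subsets of `ℕ`. -/
noncomputable def CC (α : ℕ → Bool) : ℕ → Bool := fun m =>
  match (Encodable.decode (α := ℕ × List (List Bool)) m) with
  | none => false
  | some (k, L) => decide (List.ofFn (fun i : Fin k => α i) ∈ L)

lemma measurable_CC : Measurable CC := by
  apply measurable_pi_lambda
  intro m
  rcases h : (Encodable.decode (α := ℕ × List (List Bool)) m) with _ | ⟨k, L⟩
  · have : (fun α => CC α m) = fun _ => false := by
      funext α; simp only [CC, h]
    rw [this]; exact measurable_const
  · have : (fun α => CC α m) =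
        (fun s : Fin k → Bool => decide (List.ofFn s ∈ L)) ∘ (fun α i => α (i : Fin k).1) := by
      funext α; simp only [CC, h, Function.comp]
    rw [this]
    exact (measurable_of_countable _).comp (measurable_pi_lambda _ fun i => measurable_pi_apply _)

/-- Independence of the family `CC`. -/
lemma CC_indep {ι : Type} [Fintype ι] (g : ι → ℕ → Bool) (ε : ι → Bool)
    (hg : ∀ i j, g i = g j → ε i = ε j) : ∃ m, ∀ i, CC (g i) m = ε i := by
  classical
  -- choose a level `k` separating all distinct values of `g`
  obtain ⟨k, hk⟩ : ∃ k, ∀ i j, g i ≠ g j → ∃ n < k, g i n ≠ g j n := by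
    have h1 : ∀ p : ι × ι, ∃ k, g p.1 ≠ g p.2 → ∃ n < k, g p.1 n ≠ g p.2 n := by
      intro p
      by_cases h : g p.1 = g p.2
      · exact ⟨0, fun hc => absurd h hc⟩
      · obtain ⟨n, hn⟩ := Function.ne_iff.1 h
        exact ⟨n + 1, fun _ => ⟨n, Nat.lt_succ_self n, hn⟩⟩
    choose F hF using h1
    refine ⟨(Finset.univ : Finset (ι × ι)).sup F, fun i j hij => ?_⟩
    obtain ⟨n, hn1, hn2⟩ := hF (i, j) hij
    exact ⟨n, lt_of_lt_of_le hn1 (Finset.le_sup (Finset.mem_univ (i, j))), hn2⟩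
  set L : List (List Bool) :=
    ((Finset.univ.filter fun i => ε i = true).image
      fun i => List.ofFn fun t : Fin k => g i t.1).toList with hL
  refine ⟨Encodable.encode ((k, L) : ℕ × List (List Bool)), fun i => ?_⟩
  have hdec : (Encodable.decode (α := ℕ × List (List Bool))
      (Encodable.encode ((k, L) : ℕ × List (List Bool)))) = some (k, L) := Encodable.encodek _
  have hmem : (List.ofFn fun t : Fin k => g i t.1) ∈ L ↔ ε i = true := by
    rw [hL]
    simp only [Finset.mem_toList, Finset.mem_image, Finset.mem_filter, Finset.mem_univ, true_and]
    constructor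
    · rintro ⟨j, hj, hji⟩
      have : g j = g i := by
        by_contra hne
        obtain ⟨n, hn1, hn2⟩ := hk j i hne
        rw [List.ofFn_inj] at hji
        exact hn2 (by have := congrFun hji ⟨n, hn1⟩; simpa using this)
      rw [← hg j i this]; exact hj
    · intro hi; exact ⟨i, hi, rfl⟩
  simp only [CC, hdec]
  rcases h : ε i with _ | _
  · simp only [decide_eq_false_iff_not]
    intro hc; have := hmem.1 hc; rw [h] at this; simp at this
  · simp only [decide_eq_true_eq]; exact hmem.2 h

/-- `CC` is injective. -/
lemma CC_inj : Function.Injective CC := by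
  intro a b hab
  by_contra hne
  obtain ⟨m, hm⟩ := CC_indep (ι := Bool) (fun i => if i then a else b) (fun i => i)
    (by intro i j h; rcases i <;> rcases j <;> simp_all <;> exact absurd h.symm hne)
  have h1 := hm true
  have h2 := hm false
  simp only [if_true] at h1
  simp only [Bool.false_eq_true, if_false] at h2
  rw [hab] at h1
  rw [h1] at h2
  simp at h2

/-! ### The relation-specific sets -/

section Rel

variable {X : Type*} (E : X → X → Prop) (f : X → ℕ → Bool)

/-- symmetric difference of codes of two points. -/
noncomputable def dd (y y' : X) : ℕ → Bool := fun n => CC (f y) n != CC (f y') n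

/-- The "safe" co-ideal obstruction set: sets containing no bad symmetric difference. -/
def MM : Set (ℕ → Bool) := {z | ∀ y y', le01 (dd f y y') z → E y y'}

/-- symmetric differences of codes of `E`-related points. -/
def Dgood : Set (ℕ → Bool) := {z | ∃ y y', E y y' ∧ z = dd f y y'}

lemma MM_down {z z' : ℕ → Bool} (h : le01 z' z) (hz : z ∈ MM E f) : z' ∈ MM E f :=
  fun y y' hle => hz y y' (le01_trans hle h)

/-- The key combinatorial fact: a union of good differences contains no bad difference. -/
lemma cov_Dgood_subset_MM (hE : Equivalence E) (hf : Function.Injective f) :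
    ∀ z, cov (Dgood E f) z → z ∈ MM E f := by
  classical
  rintro z ⟨l, w, hw, hle⟩ y y' hdz
  by_contra hne
  -- choose the related pairs witnessing each `w i`
  have h1 : ∀ i, ∃ p : X × X, E p.1 p.2 ∧ w i = dd f p.1 p.2 := by
    intro i; obtain ⟨a, b, hab, hw'⟩ := hw i; exact ⟨(a, b), hab, hw'⟩
  choose p hp hwd using h1
  -- apply independence to the finite family of points involved
  set pt : Bool ⊕ (Fin l ⊕ Fin l) → X :=
    Sum.elim (fun t => if t then y else y') (Sum.elim (fun i => (p i).1) fun i => (p i).2) with hpt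
  obtain ⟨m, hm⟩ := CC_indep (fun u => f (pt u)) (fun u => decide (E (pt u) y))
    (fun i j hij => by show decide (E (pt i) y) = decide (E (pt j) y); rw [hf hij])
  -- the bad difference is nonzero at `m`
  have hy : CC (f y) m = true := by
    have := hm (Sum.inl true); simpa [hpt, hE.refl y] using this
  have hy' : CC (f y') m = false := by
    have := hm (Sum.inl false)
    have h2 : ¬ E y' y := fun hc => hne (hE.symm hc)
    simpa [hpt, h2] using this
  have hdm : dd f y y' m = true := by
    simp only [dd, hy, hy']; rfl
  -- but every good difference is zero at `m`
  have hzm : z m = true := hdz m hdm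
  obtain ⟨i, hi⟩ := usup_eq_true.1 (hle m hzm)
  rw [hwd i] at hi
  have ha := hm (Sum.inr (Sum.inl i))
  have hb := hm (Sum.inr (Sum.inr i))
  simp only [hpt, Sum.elim_inr, Sum.elim_inl] at ha hb
  have hEab : E (p i).1 y ↔ E (p i).2 y := by
    constructor
    · intro h; exact hE.trans (hE.symm (hp i)) h
    · intro h; exact hE.trans (hp i) h
  have : CC (f (p i).1) m = CC (f (p i).2) m := by
    rw [ha, hb]; simp [hEab]
  simp only [dd, this] at hi
  simp at hi

end Rel

/-! ### Analyticity lemmas -/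

section Analytic

lemma analyticSet_pi_fin {A : Set (ℕ → Bool)} (hA : AnalyticSet A) (l : ℕ) :
    AnalyticSet {a : Fin l → (ℕ → Bool) | ∀ i, a i ∈ A} := by
  cases l with
  | zero =>
      have : {a : Fin 0 → (ℕ → Bool) | ∀ i, a i ∈ A} = Set.univ :=
        Set.eq_univ_iff_forall.2 fun a i => i.elim0
      rw [this]
      exact MeasurableSet.univ.analyticSet
  | succ l =>
      have : {a : Fin (l + 1) → (ℕ → Bool) | ∀ i, a i ∈ A} =
          ⋂ i : Fin (l + 1), (fun a : Fin (l + 1) → (ℕ → Bool) => a i) ⁻¹' A := by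
        ext a; simp [Set.mem_iInter]
      rw [this]
      exact AnalyticSet.iInter fun i => hA.preimage (continuous_apply i)

/-- the set of `z` covered by finite unions from an analytic set is analytic -/
lemma analyticSet_covSet {S : Set (ℕ → Bool)} (hS : AnalyticSet S) :
    AnalyticSet {z | cov S z} := by
  have : {z | cov S z} = ⋃ l, Prod.fst ''
      {q : (ℕ → Bool) × (Fin l → ℕ → Bool) | (∀ i, q.2 i ∈ S) ∧ le01 q.1 (usup l q.2)} := by
    ext z
    simp only [Set.mem_setOf_eq, Set.mem_iUnion, Set.mem_image, cov, Prod.exists]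
    constructor
    · rintro ⟨l, w, hw, hle⟩; exact ⟨l, z, w, ⟨hw, hle⟩, rfl⟩
    · rintro ⟨l, z', w, ⟨hw, hle⟩, rfl⟩; exact ⟨l, w, hw, hle⟩
  rw [this]
  refine AnalyticSet.iUnion fun l => AnalyticSet.image_of_continuous ?_ continuous_fst
  have h1 : AnalyticSet {q : (ℕ → Bool) × (Fin l → ℕ → Bool) | ∀ i, q.2 i ∈ S} :=
    (analyticSet_pi_fin hS l).preimage continuous_snd
  have h2 : MeasurableSet {q : (ℕ → Bool) × (Fin l → ℕ → Bool) | le01 q.1 (usup l q.2)} := by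
    have : {q : (ℕ → Bool) × (Fin l → ℕ → Bool) | le01 q.1 (usup l q.2)} =
        ⋂ n, ({q : (ℕ → Bool) × (Fin l → ℕ → Bool) | q.1 n = true}ᶜ ∪
          ⋃ i, {q : (ℕ → Bool) × (Fin l → ℕ → Bool) | q.2 i n = true}) := by
      ext q
      simp only [Set.mem_setOf_eq, Set.mem_iInter, Set.mem_union, Set.mem_compl_iff,
        Set.mem_iUnion, le01, usup_eq_true]
      constructor
      · intro h n; by_cases hq : q.1 n = true
        · exact Or.inr (h n hq)
        · exact Or.inl hq
      · intro h n hq; rcases h n with h' | h'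
        · exact absurd hq h'
        · exact h'
    rw [this]
    refine MeasurableSet.iInter fun n => MeasurableSet.union ?_ (MeasurableSet.iUnion fun i => ?_)
    · have hm : Measurable fun q : (ℕ → Bool) × (Fin l → ℕ → Bool) => q.1 n :=
        (measurable_pi_apply n).comp measurable_fst
      exact (hm (measurableSet_singleton true)).compl
    · have hm : Measurable fun q : (ℕ → Bool) × (Fin l → ℕ → Bool) => q.2 i n :=
        (measurable_pi_apply n).comp ((measurable_pi_apply i).comp measurable_snd)
      exact hm (measurableSet_singleton true)
  have : {q : (ℕ → Bool) × (Fin l → ℕ → Bool) | (∀ i, q.2 i ∈ S) ∧ le01 q.1 (usup l q.2)} =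
      {q : (ℕ → Bool) × (Fin l → ℕ → Bool) | ∀ i, q.2 i ∈ S} ∩
      {q : (ℕ → Bool) × (Fin l → ℕ → Bool) | le01 q.1 (usup l q.2)} := rfl
  rw [this]
  have hni : Nonempty (Fin 2) := inferInstance
  have := AnalyticSet.iInter (ι := Fin 2)
    (s := fun i => if i = 0 then {q : (ℕ → Bool) × (Fin l → ℕ → Bool) | ∀ i, q.2 i ∈ S}
      else {q : (ℕ → Bool) × (Fin l → ℕ → Bool) | le01 q.1 (usup l q.2)}) ?_
  · convert this using 1
    ext q
    simp only [Set.mem_inter_iff, Set.mem_iInter]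
    constructor
    · rintro ⟨hq1, hq2⟩ i; by_cases h : i = 0 <;> simp [h, hq1, hq2]
    · intro h; exact ⟨by simpa using h 0, by simpa using h 1⟩
  · intro i; by_cases h : i = 0 <;> simp only [h, if_true, if_false]
    · exact h1
    · simpa [h] using h2.analyticSet

end Analytic

lemma analyticSet_inter {α : Type*} [TopologicalSpace α] [T2Space α] {s t : Set α}
    (hs : AnalyticSet s) (ht : AnalyticSet t) : AnalyticSet (s ∩ t) := by
  have : s ∩ t = ⋂ b : Bool, (if b then s else t) := by
    ext x
    simp only [Set.mem_inter_iff, Set.mem_iInter]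
    constructor
    · rintro ⟨h1, h2⟩ b; cases b <;> simpa
    · intro h; exact ⟨by simpa using h true, by simpa using h false⟩
  rw [this]
  exact AnalyticSet.iInter fun b => by cases b <;> simpa

section Sep

variable {X : Type*} [TopologicalSpace X] [PolishSpace X] [MeasurableSpace X] [BorelSpace X]
variable (E : X → X → Prop) (f : X → ℕ → Bool)

/-- The Lusin-separation target set at stage `j`. -/
def TT (A S : Set (ℕ → Bool)) (j : ℕ) : Set (ℕ → Bool) :=
  {b | ∀ (c : Fin j → ℕ → Bool) (l : ℕ) (a : Fin l → ℕ → Bool),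
      (∀ i, c i ∈ S) → (∀ i, a i ∈ A) →
      (fun n => (b n || usup j c n) || usup l a n) ∈ MM E f}

lemma TT_anti {A S S' : Set (ℕ → Bool)} (h : S' ⊆ S) (j : ℕ) :
    TT E f A S j ⊆ TT E f A S' j :=
  fun b hb c l a hc ha => hb c l a (fun i => h (hc i)) ha

lemma analyticSet_compl_TT (hEm : MeasurableSet {p : X × X | E p.1 p.2})
    (hθ : Measurable fun x => CC (f x)) {A S : Set (ℕ → Bool)}
    (hA : AnalyticSet A) (hS : MeasurableSet S) (j : ℕ) :
    AnalyticSet (TT E f A S j)ᶜ := by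
  have key : (TT E f A S j)ᶜ = ⋃ l, Prod.fst ''
      {q : (ℕ → Bool) × ((Fin j → ℕ → Bool) × ((Fin l → ℕ → Bool) × (X × X))) |
        (∀ i, q.2.1 i ∈ S) ∧ (∀ i, q.2.2.1 i ∈ A) ∧ ¬ E q.2.2.2.1 q.2.2.2.2 ∧
        le01 (dd f q.2.2.2.1 q.2.2.2.2)
          (fun n => (q.1 n || usup j q.2.1 n) || usup l q.2.2.1 n)} := by
    ext b
    constructor
    · intro hb
      have hb' : ¬ ∀ (c : Fin j → ℕ → Bool) (l : ℕ) (a : Fin l → ℕ → Bool),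
          (∀ i, c i ∈ S) → (∀ i, a i ∈ A) →
          (fun n => (b n || usup j c n) || usup l a n) ∈ MM E f := hb
      push_neg at hb'
      obtain ⟨c, l, a, hc, ha, hM⟩ := hb'
      have hyy : ∃ y y', le01 (dd f y y')
          (fun n => (b n || usup j c n) || usup l a n) ∧ ¬ E y y' := by
        by_contra hcon
        push_neg at hcon
        exact hM fun y y' hle => hcon y y' hle
      obtain ⟨y, y', hle, hnE⟩ := hyy
      exact Set.mem_iUnion.2 ⟨l, ⟨(b, (c, (a, (y, y')))), ⟨hc, ha, hnE, hle⟩, rfl⟩⟩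
    · intro hb
      simp only [Set.mem_iUnion, Set.mem_image] at hb
      obtain ⟨l, q, ⟨hc, ha, hnE, hle⟩, hfst⟩ := hb
      intro hTT
      rw [hfst] at hle
      exact hnE (hTT q.2.1 l q.2.2.1 hc ha q.2.2.2.1 q.2.2.2.2 hle)
  rw [key]
  refine AnalyticSet.iUnion fun l => ?_
  haveI h0 : BorelSpace ((Fin l → ℕ → Bool) × (X × X)) := inferInstance
  haveI h1 : BorelSpace ((Fin j → ℕ → Bool) × ((Fin l → ℕ → Bool) × (X × X))) := inferInstance
  haveI h2 : BorelSpace ((ℕ → Bool) × ((Fin j → ℕ → Bool) ×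
    ((Fin l → ℕ → Bool) × (X × X)))) := inferInstance
  refine AnalyticSet.image_of_continuous ?_ continuous_fst
  -- the pieces
  have hSpart : MeasurableSet {q : (ℕ → Bool) × ((Fin j → ℕ → Bool) ×
      ((Fin l → ℕ → Bool) × (X × X))) | ∀ i, q.2.1 i ∈ S} := by
    have : {q : (ℕ → Bool) × ((Fin j → ℕ → Bool) × ((Fin l → ℕ → Bool) × (X × X))) |
        ∀ i, q.2.1 i ∈ S} = ⋂ i, (fun q : (ℕ → Bool) × ((Fin j → ℕ → Bool) ×
          ((Fin l → ℕ → Bool) × (X × X))) => q.2.1 i) ⁻¹' S := by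
      ext q; simp [Set.mem_iInter]
    rw [this]
    exact MeasurableSet.iInter fun i =>
      ((measurable_pi_apply i).comp (measurable_fst.comp measurable_snd)) hS
  have hApart : AnalyticSet {q : (ℕ → Bool) × ((Fin j → ℕ → Bool) ×
      ((Fin l → ℕ → Bool) × (X × X))) | ∀ i, q.2.2.1 i ∈ A} := by
    have : {q : (ℕ → Bool) × ((Fin j → ℕ → Bool) × ((Fin l → ℕ → Bool) × (X × X))) |
        ∀ i, q.2.2.1 i ∈ A} = (fun q : (ℕ → Bool) × ((Fin j → ℕ → Bool) ×
          ((Fin l → ℕ → Bool) × (X × X))) => q.2.2.1) ⁻¹'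
          {a : Fin l → ℕ → Bool | ∀ i, a i ∈ A} := rfl
    rw [this]
    exact (analyticSet_pi_fin hA l).preimage
      (continuous_fst.comp (continuous_snd.comp continuous_snd))
  have hEpart : MeasurableSet {q : (ℕ → Bool) × ((Fin j → ℕ → Bool) ×
      ((Fin l → ℕ → Bool) × (X × X))) | ¬ E q.2.2.2.1 q.2.2.2.2} := by
    have : {q : (ℕ → Bool) × ((Fin j → ℕ → Bool) × ((Fin l → ℕ → Bool) × (X × X))) |
        ¬ E q.2.2.2.1 q.2.2.2.2} = (fun q : (ℕ → Bool) × ((Fin j → ℕ → Bool) ×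
          ((Fin l → ℕ → Bool) × (X × X))) => q.2.2.2) ⁻¹' {p : X × X | E p.1 p.2}ᶜ := rfl
    rw [this]
    exact (measurable_snd.comp (measurable_snd.comp measurable_snd)) hEm.compl
  have hLpart : MeasurableSet {q : (ℕ → Bool) × ((Fin j → ℕ → Bool) ×
      ((Fin l → ℕ → Bool) × (X × X))) | le01 (dd f q.2.2.2.1 q.2.2.2.2)
        (fun n => (q.1 n || usup j q.2.1 n) || usup l q.2.2.1 n)} := by
    have heq : {q : (ℕ → Bool) × ((Fin j → ℕ → Bool) × ((Fin l → ℕ → Bool) × (X × X))) |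
        le01 (dd f q.2.2.2.1 q.2.2.2.2)
          (fun n => (q.1 n || usup j q.2.1 n) || usup l q.2.2.1 n)} =
        ⋂ n, ({q : (ℕ → Bool) × ((Fin j → ℕ → Bool) × ((Fin l → ℕ → Bool) × (X × X))) |
            CC (f q.2.2.2.1) n = CC (f q.2.2.2.2) n} ∪
          ({q | q.1 n = true} ∪ ((⋃ i, {q : (ℕ → Bool) × ((Fin j → ℕ → Bool) ×
            ((Fin l → ℕ → Bool) × (X × X))) | q.2.1 i n = true}) ∪
            ⋃ i, {q : (ℕ → Bool) × ((Fin j → ℕ → Bool) ×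
            ((Fin l → ℕ → Bool) × (X × X))) | q.2.2.1 i n = true}))) := by
      ext q
      constructor
      · intro h
        refine Set.mem_iInter.2 fun n => ?_
        by_cases hd : CC (f q.2.2.2.1) n = CC (f q.2.2.2.2) n
        · exact Or.inl hd
        · have hdt : dd f q.2.2.2.1 q.2.2.2.2 n = true := by simp [dd, hd]
          have h2 := h n hdt
          refine Or.inr ?_
          rcases Bool.or_eq_true_iff.1 h2 with h' | h'
          · rcases Bool.or_eq_true_iff.1 h' with h'' | h''
            · exact Or.inl h''
            · obtain ⟨i, hi⟩ := usup_eq_true.1 h''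
              exact Or.inr (Or.inl (Set.mem_iUnion.2 ⟨i, hi⟩))
          · obtain ⟨i, hi⟩ := usup_eq_true.1 h'
            exact Or.inr (Or.inr (Set.mem_iUnion.2 ⟨i, hi⟩))
      · intro h n hdt
        have hd : ¬ (CC (f q.2.2.2.1) n = CC (f q.2.2.2.2) n) := by
          simpa [dd] using hdt
        rcases Set.mem_iInter.1 h n with h' | h'
        · exact absurd h' hd
        · rcases h' with h' | h'
          · exact Bool.or_eq_true_iff.2 (Or.inl (Bool.or_eq_true_iff.2 (Or.inl h')))
          · rcases h' with h' | h'
            · obtain ⟨i, hi⟩ := Set.mem_iUnion.1 h'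
              exact Bool.or_eq_true_iff.2
                (Or.inl (Bool.or_eq_true_iff.2 (Or.inr (usup_eq_true.2 ⟨i, hi⟩))))
            · obtain ⟨i, hi⟩ := Set.mem_iUnion.1 h'
              exact Bool.or_eq_true_iff.2 (Or.inr (usup_eq_true.2 ⟨i, hi⟩))
    rw [heq]
    refine MeasurableSet.iInter fun n => ?_
    refine MeasurableSet.union ?_ (MeasurableSet.union ?_ (MeasurableSet.union ?_ ?_))
    · have g1 : Measurable fun q : (ℕ → Bool) × ((Fin j → ℕ → Bool) ×
          ((Fin l → ℕ → Bool) × (X × X))) => CC (f q.2.2.2.1) n :=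
        (measurable_pi_apply n).comp (hθ.comp
          (measurable_fst.comp (measurable_snd.comp (measurable_snd.comp measurable_snd))))
      have g2 : Measurable fun q : (ℕ → Bool) × ((Fin j → ℕ → Bool) ×
          ((Fin l → ℕ → Bool) × (X × X))) => CC (f q.2.2.2.2) n :=
        (measurable_pi_apply n).comp (hθ.comp
          (measurable_snd.comp (measurable_snd.comp (measurable_snd.comp measurable_snd))))
      have : {q : (ℕ → Bool) × ((Fin j → ℕ → Bool) × ((Fin l → ℕ → Bool) × (X × X))) |
          CC (f q.2.2.2.1) n = CC (f q.2.2.2.2) n} =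
          (fun q : (ℕ → Bool) × ((Fin j → ℕ → Bool) × ((Fin l → ℕ → Bool) × (X × X))) =>
            (CC (f q.2.2.2.1) n == CC (f q.2.2.2.2) n)) ⁻¹' {true} := by
        ext q; simp
      rw [this]
      exact ((measurable_of_countable (fun p : Bool × Bool => p.1 == p.2)).comp
        (g1.prodMk g2)) (measurableSet_singleton true)
    · have hm : Measurable fun q : (ℕ → Bool) × ((Fin j → ℕ → Bool) ×
          ((Fin l → ℕ → Bool) × (X × X))) => q.1 n := (measurable_pi_apply n).comp measurable_fst
      exact hm (measurableSet_singleton true)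
    · refine MeasurableSet.iUnion fun i => ?_
      have hm : Measurable fun q : (ℕ → Bool) × ((Fin j → ℕ → Bool) ×
          ((Fin l → ℕ → Bool) × (X × X))) => q.2.1 i n :=
        (measurable_pi_apply n).comp
          ((measurable_pi_apply i).comp (measurable_fst.comp measurable_snd))
      exact hm (measurableSet_singleton true)
    · refine MeasurableSet.iUnion fun i => ?_
      have hm : Measurable fun q : (ℕ → Bool) × ((Fin j → ℕ → Bool) ×
          ((Fin l → ℕ → Bool) × (X × X))) => q.2.2.1 i n :=
        (measurable_pi_apply n).comp ((measurable_pi_apply i).comp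
          (measurable_fst.comp (measurable_snd.comp measurable_snd)))
      exact hm (measurableSet_singleton true)
  have : {q : (ℕ → Bool) × ((Fin j → ℕ → Bool) × ((Fin l → ℕ → Bool) × (X × X))) |
      (∀ i, q.2.1 i ∈ S) ∧ (∀ i, q.2.2.1 i ∈ A) ∧ ¬ E q.2.2.2.1 q.2.2.2.2 ∧
      le01 (dd f q.2.2.2.1 q.2.2.2.2)
        (fun n => (q.1 n || usup j q.2.1 n) || usup l q.2.2.1 n)} =
      {q : (ℕ → Bool) × ((Fin j → ℕ → Bool) × ((Fin l → ℕ → Bool) × (X × X))) |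
        ∀ i, q.2.1 i ∈ S} ∩ ({q | ∀ i, q.2.2.1 i ∈ A} ∩
        ({q | ¬ E q.2.2.2.1 q.2.2.2.2} ∩ {q | le01 (dd f q.2.2.2.1 q.2.2.2.2)
          (fun n => (q.1 n || usup j q.2.1 n) || usup l q.2.2.1 n)})) := by
    rfl
  rw [this]
  exact analyticSet_inter hSpart.analyticSet (analyticSet_inter hApart
    (analyticSet_inter hEpart.analyticSet hLpart.analyticSet))

lemma subset_TT_zero {A S : Set (ℕ → Bool)}
    (hAM : ∀ z, cov A z → z ∈ MM E f) : A ⊆ TT E f A S 0 := by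
  intro a haA c l aa hc ha
  refine hAM _ ⟨l + 1, Fin.cons a aa, ?_, ?_⟩
  · intro i
    refine Fin.cases ?_ (fun i' => ?_) i
    · simpa using haA
    · simpa using ha i'
  · intro n hn
    rcases Bool.or_eq_true_iff.1 hn with h' | h'
    · rcases Bool.or_eq_true_iff.1 h' with h'' | h''
      · exact usup_eq_true.2 ⟨0, by simpa using h''⟩
      · obtain ⟨i, hi⟩ := usup_eq_true.1 h''
        exact i.elim0
    · obtain ⟨i, hi⟩ := usup_eq_true.1 h'
      exact usup_eq_true.2 ⟨i.succ, by simpa using hi⟩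

lemma subset_TT_succ {A S : Set (ℕ → Bool)} {j : ℕ}
    (hinv : S ⊆ TT E f A S j) : A ⊆ TT E f A S (j + 1) := by
  intro a haA c l aa hc ha
  have h0 := hinv (hc 0) (Fin.tail c) (l + 1) (Fin.cons a aa)
    (fun i => hc i.succ)
    (fun i => by refine Fin.cases ?_ (fun i' => ?_) i
                 · simpa using haA
                 · simpa using ha i')
  refine MM_down E f ?_ h0
  intro n hn
  rcases Bool.or_eq_true_iff.1 hn with h' | h'
  · rcases Bool.or_eq_true_iff.1 h' with h'' | h''
    · -- a n = true : goes into the cons tuple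
      exact Bool.or_eq_true_iff.2 (Or.inr (usup_eq_true.2 ⟨0, by simpa using h''⟩))
    · obtain ⟨i, hi⟩ := usup_eq_true.1 h''
      refine Fin.cases ?_ (fun i' hi' => ?_) i hi
      · intro h0'; exact Bool.or_eq_true_iff.2 (Or.inl (Bool.or_eq_true_iff.2 (Or.inl h0')))
      · exact Bool.or_eq_true_iff.2 (Or.inl (Bool.or_eq_true_iff.2
          (Or.inr (usup_eq_true.2 ⟨i', by simpa [Fin.tail] using hi'⟩))))
  · obtain ⟨i, hi⟩ := usup_eq_true.1 h'
    exact Bool.or_eq_true_iff.2 (Or.inr (usup_eq_true.2 ⟨i.succ, by simpa using hi⟩))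

/-- Inner iterated-Lusin lemma: any analytic `A` whose finite-union covers stay in `MM`
can be enlarged to a Borel set with the same property. -/
lemma exists_borel_expansion (hEm : MeasurableSet {p : X × X | E p.1 p.2})
    (hθ : Measurable fun x => CC (f x)) {A : Set (ℕ → Bool)}
    (hA : AnalyticSet A) (hAM : ∀ z, cov A z → z ∈ MM E f) :
    ∃ B : Set (ℕ → Bool), MeasurableSet B ∧ A ⊆ B ∧ ∀ z, cov B z → z ∈ MM E f := by
  classical
  have step : ∀ (j : ℕ) (S : Set (ℕ → Bool)), MeasurableSet S → A ⊆ S →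
      S ⊆ TT E f A S j →
      ∃ S', MeasurableSet S' ∧ A ⊆ S' ∧ S' ⊆ TT E f A S' (j + 1) := by
    intro j S hSm hAS hinv
    have hAT : A ⊆ TT E f A S (j + 1) := subset_TT_succ E f hinv
    obtain ⟨u, hAu, hdis, hum⟩ := hA.measurablySeparable
      (analyticSet_compl_TT E f hEm hθ hA hSm (j + 1))
      (Set.disjoint_left.2 fun z hz hz' => hz' (hAT hz))
    have hu : u ⊆ TT E f A S (j + 1) := fun b hb => by
      by_contra hc
      exact Set.disjoint_left.1 hdis hc hb
    refine ⟨S ∩ u, hSm.inter hum, fun a ha => ⟨hAS ha, hAu ha⟩, ?_⟩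
    exact fun b hb => TT_anti E f Set.inter_subset_left (j + 1) (hu hb.2)
  have base : ∃ S₀ : Set (ℕ → Bool), MeasurableSet S₀ ∧ A ⊆ S₀ ∧ S₀ ⊆ TT E f A S₀ 0 := by
    have hAT : A ⊆ TT E f A Set.univ 0 := subset_TT_zero E f hAM
    obtain ⟨u, hAu, hdis, hum⟩ := hA.measurablySeparable
      (analyticSet_compl_TT E f hEm hθ hA MeasurableSet.univ 0)
      (Set.disjoint_left.2 fun z hz hz' => hz' (hAT hz))
    have hu : u ⊆ TT E f A Set.univ 0 := fun b hb => by
      by_contra hc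
      exact Set.disjoint_left.1 hdis hc hb
    exact ⟨u, hum, hAu, fun b hb => TT_anti E f (Set.subset_univ u) 0 (hu hb)⟩
  -- the decreasing chain
  let P : ℕ → Set (ℕ → Bool) → Prop := fun j S => MeasurableSet S ∧ A ⊆ S ∧ S ⊆ TT E f A S j
  let C : (j : ℕ) → {S : Set (ℕ → Bool) // P j S} := fun j =>
    Nat.rec ⟨base.choose, base.choose_spec.1, base.choose_spec.2.1, base.choose_spec.2.2⟩
      (fun j ih =>
        ⟨(step j ih.1 ih.2.1 ih.2.2.1 ih.2.2.2).choose,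
         (step j ih.1 ih.2.1 ih.2.2.1 ih.2.2.2).choose_spec.1,
         (step j ih.1 ih.2.1 ih.2.2.1 ih.2.2.2).choose_spec.2.1,
         (step j ih.1 ih.2.1 ih.2.2.1 ih.2.2.2).choose_spec.2.2⟩) j
  refine ⟨⋂ j, (C j).1, MeasurableSet.iInter fun j => (C j).2.1,
    Set.subset_iInter fun j => (C j).2.2.1, ?_⟩
  rintro z ⟨l, w, hw, hle⟩
  match l, w, hw, hle with
  | 0, w, hw, hle =>
      exact hAM z ⟨0, w, fun i => i.elim0, hle⟩
  | (l' + 1), w, hw, hle =>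
      have hB : ∀ i, w i ∈ (C l').1 := fun i => Set.mem_iInter.1 (hw i) l'
      have h0 := (C l').2.2.2 (hB 0) (Fin.tail w) 0 Fin.elim0
        (fun i => hB i.succ) (fun i => i.elim0)
      refine MM_down E f ?_ h0
      intro n hn
      obtain ⟨i, hi⟩ := usup_eq_true.1 (hle n hn)
      refine Fin.cases ?_ (fun i' hi' => ?_) i hi
      · intro h0'
        exact Bool.or_eq_true_iff.2 (Or.inl (Bool.or_eq_true_iff.2 (Or.inl h0')))
      · exact Bool.or_eq_true_iff.2 (Or.inl (Bool.or_eq_true_iff.2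
          (Or.inr (usup_eq_true.2 ⟨i', by simpa [Fin.tail] using hi'⟩))))

lemma analyticSet_Dgood (hEm : MeasurableSet {p : X × X | E p.1 p.2})
    (hθ : Measurable fun x => CC (f x)) : AnalyticSet (Dgood E f) := by
  haveI : StandardBorelSpace (X × X) := inferInstance
  have hg : Measurable fun p : X × X => dd f p.1 p.2 := by
    refine measurable_pi_lambda _ fun n => ?_
    have g1 : Measurable fun p : X × X => CC (f p.1) n :=
      (measurable_pi_apply n).comp (hθ.comp measurable_fst)
    have g2 : Measurable fun p : X × X => CC (f p.2) n :=
      (measurable_pi_apply n).comp (hθ.comp measurable_snd)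
    exact (measurable_of_countable fun bb : Bool × Bool => bb.1 != bb.2).comp (g1.prodMk g2)
  have : Dgood E f = (fun p : X × X => dd f p.1 p.2) '' {p : X × X | E p.1 p.2} := by
    ext z
    simp only [Dgood, Set.mem_setOf_eq, Set.mem_image, Prod.exists]
    constructor
    · rintro ⟨y, y', h, rfl⟩; exact ⟨y, y', h, rfl⟩
    · rintro ⟨y, y', h, rfl⟩; exact ⟨y, y', h, rfl⟩
  rw [this]
  exact hEm.analyticSet_image hg

/-- The packaged construction: a Borel ideal whose induced equivalence pulls back to `E`. -/
lemma exists_ideal (hE : Equivalence E) (hf : Function.Injective f)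
    (hEm : MeasurableSet {p : X × X | E p.1 p.2})
    (hθ : Measurable fun x => CC (f x)) :
    ∃ I : Set (ℕ → Bool),
      ((fun _ => false) ∈ I ∧
        (∀ x y : ℕ → Bool, y ∈ I → (∀ n, x n = true → y n = true) → x ∈ I) ∧
        (∀ x y : ℕ → Bool, x ∈ I → y ∈ I → (fun n => x n || y n) ∈ I)) ∧
      MeasurableSet I ∧
      ∀ x x', E x x' ↔ (fun n => CC (f x) n != CC (f x') n) ∈ I := by
  classical
  have hDg : AnalyticSet (Dgood E f) := analyticSet_Dgood E f hEm hθ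
  have hbase : ∀ z, cov {z | cov (Dgood E f) z} z → z ∈ MM E f := fun z hz =>
    cov_Dgood_subset_MM E f hE hf z (cov_idem hz)
  -- the outer chain
  let Q : Set (ℕ → Bool) → Prop := fun B => MeasurableSet B ∧ ∀ z, cov B z → z ∈ MM E f
  have hstep : ∀ B : Set (ℕ → Bool), Q B → ∃ B', Q B' ∧ {z | cov B z} ⊆ B' := by
    intro B hB
    obtain ⟨B', h1, h2, h3⟩ := exists_borel_expansion E f hEm hθ
      (analyticSet_covSet hB.1.analyticSet) (fun z hz => hB.2 z (cov_idem hz))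
    exact ⟨B', ⟨h1, h3⟩, h2⟩
  have hbase0 : ∃ B₀, Q B₀ ∧ {z | cov (Dgood E f) z} ⊆ B₀ := by
    obtain ⟨B₀, h1, h2, h3⟩ := exists_borel_expansion E f hEm hθ
      (analyticSet_covSet hDg) hbase
    exact ⟨B₀, ⟨h1, h3⟩, h2⟩
  let D : ℕ → {B : Set (ℕ → Bool) // Q B} := fun n =>
    Nat.rec ⟨hbase0.choose, hbase0.choose_spec.1⟩
      (fun _ ih => ⟨(hstep ih.1 ih.2).choose, (hstep ih.1 ih.2).choose_spec.1⟩) n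
  have hlink : ∀ n, {z | cov (D n).1 z} ⊆ (D (n + 1)).1 := fun n =>
    (hstep (D n).1 (D n).2).choose_spec.2
  have hmono : ∀ n, (D n).1 ⊆ (D (n + 1)).1 := fun n z hz => hlink n (cov_of_mem hz)
  have hmono' : ∀ m n, m ≤ n → (D m).1 ⊆ (D n).1 := by
    intro m n hmn
    induction n with
    | zero => rw [Nat.le_zero.1 hmn]
    | succ n ih =>
        rcases Nat.lt_or_ge m (n + 1) with h | h
        · exact (ih (Nat.lt_succ_iff.1 h)).trans (hmono n)
        · have : m = n + 1 := le_antisymm hmn h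
          rw [this]
  refine ⟨⋃ n, (D n).1, ⟨?_, ?_, ?_⟩, MeasurableSet.iUnion fun n => (D n).2.1, ?_⟩
  · exact Set.mem_iUnion.2 ⟨0, hbase0.choose_spec.2 (cov_bot _)⟩
  · intro x y hy hxy
    obtain ⟨n, hn⟩ := Set.mem_iUnion.1 hy
    exact Set.mem_iUnion.2 ⟨n + 1, hlink n (cov_of_le01 (cov_of_mem hn) hxy)⟩
  · intro x y hx hy
    obtain ⟨m, hm⟩ := Set.mem_iUnion.1 hx
    obtain ⟨n, hn⟩ := Set.mem_iUnion.1 hy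
    have hmx : x ∈ (D (max m n)).1 := hmono' m _ (le_max_left m n) hm
    have hny : y ∈ (D (max m n)).1 := hmono' n _ (le_max_right m n) hn
    exact Set.mem_iUnion.2 ⟨max m n + 1,
      hlink _ (cov_join (cov_of_mem hmx) (cov_of_mem hny))⟩
  · intro x x'
    constructor
    · intro h
      exact Set.mem_iUnion.2 ⟨0, hbase0.choose_spec.2 (cov_of_mem ⟨x, x', h, rfl⟩)⟩
    · intro h
      obtain ⟨n, hn⟩ := Set.mem_iUnion.1 h
      have := (D n).2.2 _ (cov_of_mem hn)
      exact this x x' (le01_refl _)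

end Sep

end RosendalAux

/-- Rosendal: every Borel equivalence relation on a Polish space is
Borel reducible to `E_I` for some Borel ideal `I` on `ℕ`. -/
theorem borel_er_reducible_to_borel_ideal
    {X : Type*} [TopologicalSpace X] [PolishSpace X]
    (E : X → X → Prop) (hE : Equivalence E)
    (hBorel : MeasurableSet[borel (X × X)] {p : X × X | E p.1 p.2}) :
    ∃ I : Set (ℕ → Bool), IsIdeal I ∧ MeasurableSet[borel (ℕ → Bool)] I ∧
      BorelReducible E (EI I) := by
  classical
  letI mX : MeasurableSpace X := borel X
  haveI : BorelSpace X := ⟨rfl⟩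
  obtain ⟨f, hfm, hfinj⟩ :=
    MeasurableSpace.measurable_injection_nat_bool_of_countablySeparated X
  have hEm : MeasurableSet {p : X × X | E p.1 p.2} := by
    rw [BorelSpace.measurable_eq (α := X × X)]
    exact hBorel
  have hθ : Measurable fun x => RosendalAux.CC (f x) := RosendalAux.measurable_CC.comp hfm
  obtain ⟨I, hIdeal, hImeas, hIiff⟩ := RosendalAux.exists_ideal E f hE hfinj hEm hθ
  refine ⟨I, hIdeal, ?_, ⟨fun x => RosendalAux.CC (f x), ?_, fun x x' => hIiff x x'⟩⟩
  · rw [← BorelSpace.measurable_eq (α := ℕ → Bool)]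
    exact hImeas
  · rw [← BorelSpace.measurable_eq (α := ℕ → Bool)]
    exact hθ
end

section
/- The equivalence relations c₀ and E_{Z₀} are Borel bireducible: c₀ is Borel reducible to E_{Z₀}, and E_{Z₀} is Borel reducible to c₀. -/
open Filter

/-- The `c₀` equivalence relation on `ℝ^ℕ`: `x ∼ y` iff `x n − y n → 0`. -/
def c0Rel (x y : ℕ → ℝ) : Prop :=
  Tendsto (fun n : ℕ => x n - y n) atTop (nhds 0)

/-- The density-zero equivalence relation `E_{Z₀}` on `2^ℕ` (subsets of `ℕ`
identified with characteristic functions): `x ∼ y` iff `x Δ y` has asymptotic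
density zero. -/
def EZ0 (x y : ℕ → Bool) : Prop :=
  Tendsto (fun n : ℕ =>
      (((Finset.range n).filter (fun m => x m ≠ y m)).card : ℝ) / (n : ℝ))
    atTop (nhds 0)

open Finset
noncomputable section C0EZ0Aux

/-- tendsto 0 iff eventually small in abs -/
lemma tend0_iff {f : ℕ → ℝ} :
    Tendsto f atTop (nhds 0) ↔ ∀ ε > 0, ∀ᶠ n in atTop, |f n| < ε := by
  rw [NormedAddCommGroup.tendsto_nhds_zero]
  simp only [Real.norm_eq_abs]

lemma tendsto_transfer {f g c : ℕ → ℝ} (h : ∀ m, |f m - g m| ≤ c m)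
    (hc : Tendsto c atTop (nhds 0)) :
    (Tendsto f atTop (nhds 0) ↔ Tendsto g atTop (nhds 0)) := by
  have hfg : Tendsto (fun m => f m - g m) atTop (nhds 0) :=
    squeeze_zero_norm (by simpa [Real.norm_eq_abs] using h) hc
  constructor
  · intro hf
    have := hf.sub hfg
    simpa using this
  · intro hg
    have := hg.add hfg
    simpa [add_sub_cancel] using this

lemma tendsto_const_div_two_pow (c : ℝ) :
    Tendsto (fun m : ℕ => c / 2 ^ m) atTop (nhds 0) := by
  have h := tendsto_pow_atTop_nhds_zero_of_lt_one
    (by norm_num : (0:ℝ) ≤ 1/2) (by norm_num : (1/2 : ℝ) < 1)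
  have h2 := h.const_mul c
  rw [mul_zero] at h2
  refine h2.congr fun m => ?_
  rw [div_pow, one_pow, mul_one_div]

lemma geom_avg {a : ℕ → ℝ} (h0 : ∀ i, 0 ≤ a i)
    (hr : Tendsto (fun i => a i / 2 ^ i) atTop (nhds 0)) :
    Tendsto (fun m => (∑ i ∈ Finset.range m, a i) / 2 ^ m) atTop (nhds 0) := by
  rw [tend0_iff]
  intro ε hε
  obtain ⟨K, hK⟩ := eventually_atTop.1 ((tend0_iff.1 hr) (ε/4) (by linarith))
  set C := ∑ i ∈ Finset.range K, a i with hC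
  obtain ⟨M, hM⟩ := eventually_atTop.1
    ((tend0_iff.1 (tendsto_const_div_two_pow C)) (ε/2) (by linarith))
  refine eventually_atTop.2 ⟨max K M, fun m hm => ?_⟩
  have hKm : K ≤ m := le_of_max_le_left hm
  have hMm : M ≤ m := le_of_max_le_right hm
  have hpos : (0:ℝ) < 2 ^ m := by positivity
  have hsplit : ∑ i ∈ Finset.range m, a i = C + ∑ i ∈ Finset.Ico K m, a i := by
    rw [hC, Finset.range_eq_Ico, Finset.range_eq_Ico]
    exact (Finset.sum_Ico_consecutive a (Nat.zero_le K) hKm).symm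
  have hbound : ∑ i ∈ Finset.Ico K m, a i ≤ (ε/4) * 2 ^ m := by
    calc ∑ i ∈ Finset.Ico K m, a i ≤ ∑ i ∈ Finset.Ico K m, (ε/4) * 2 ^ i := by
          refine Finset.sum_le_sum fun i hi => ?_
          have hiK : K ≤ i := (Finset.mem_Ico.1 hi).1
          have h2i : (0:ℝ) < 2 ^ i := by positivity
          have := hK i hiK
          rw [abs_of_nonneg (div_nonneg (h0 i) h2i.le)] at this
          calc a i = a i / 2 ^ i * 2 ^ i := by field_simp
            _ ≤ ε/4 * 2 ^ i := by nlinarith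
      _ ≤ ∑ i ∈ Finset.range m, (ε/4) * 2 ^ i := by
          refine Finset.sum_le_sum_of_subset_of_nonneg ?_ fun i _ _ => by positivity
          intro i hi
          simp only [Finset.mem_Ico, Finset.mem_range] at hi ⊢
          omega
      _ = (ε/4) * ∑ i ∈ Finset.range m, (2:ℝ) ^ i := by rw [Finset.mul_sum]
      _ ≤ (ε/4) * 2 ^ m := by
          have : ∑ i ∈ Finset.range m, (2:ℝ) ^ i = 2 ^ m - 1 := by
            rw [geom_sum_eq (by norm_num)]; norm_num
          nlinarith
  have hsum_nonneg : 0 ≤ ∑ i ∈ Finset.range m, a i :=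
    Finset.sum_nonneg fun i _ => h0 i
  rw [abs_of_nonneg (div_nonneg hsum_nonneg hpos.le)]
  have hCm := hM m hMm
  have hC0 : 0 ≤ C := Finset.sum_nonneg fun i _ => h0 i
  rw [abs_of_nonneg (div_nonneg hC0 hpos.le)] at hCm
  calc (∑ i ∈ Finset.range m, a i) / 2 ^ m
      = (C + ∑ i ∈ Finset.Ico K m, a i) / 2 ^ m := by rw [hsplit]
    _ ≤ (C + (ε/4) * 2 ^ m) / 2 ^ m := by gcongr
    _ = C / 2 ^ m + ε/4 := by rw [add_div, mul_div_assoc, div_self hpos.ne', mul_one]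
    _ < ε := by linarith




section blocks

variable (u v : ℕ → Bool)

def cnt (N : ℕ) : ℕ := ((Finset.range N).filter (fun j => u j ≠ v j)).card

def blk (m : ℕ) : ℕ :=
  ((Finset.range (2^m)).filter (fun j => u (2^m + j) ≠ v (2^m + j))).card

lemma cnt_le_sum (N : ℕ) :
    (cnt u v N : ℕ) = ∑ j ∈ Finset.range N, (if u j ≠ v j then 1 else 0) := by
  rw [cnt, Finset.card_filter]

lemma blk_le (m : ℕ) : blk u v m ≤ 2 ^ m := by
  calc blk u v m ≤ (Finset.range (2^m)).card := Finset.card_filter_le _ _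
    _ = 2 ^ m := Finset.card_range _

lemma cnt_mono : Monotone (cnt u v) := fun a b hab =>
  Finset.card_le_card (Finset.filter_subset_filter _ (Finset.range_subset_range.2 hab))

lemma cnt_pow (huv : u 0 = v 0) (m : ℕ) :
    cnt u v (2 ^ m) = ∑ i ∈ Finset.range m, blk u v i := by
  induction m with
  | zero =>
    simp [cnt, Finset.range_one, Finset.filter_singleton, huv]
  | succ m ih =>
    have h2 : 2 ^ (m+1) = 2 ^ m + 2 ^ m := by rw [pow_succ]; omega
    have hle : 2 ^ m ≤ 2 ^ m + 2 ^ m := Nat.le_add_right _ _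
    have hsplit : ∑ j ∈ Finset.range (2^m + 2^m), (if u j ≠ v j then 1 else 0)
        = (∑ j ∈ Finset.Ico 0 (2^m), (if u j ≠ v j then 1 else 0))
          + ∑ j ∈ Finset.Ico (2^m) (2^m + 2^m), (if u j ≠ v j then 1 else 0) := by
      rw [Finset.range_eq_Ico]
      exact (Finset.sum_Ico_consecutive _ (Nat.zero_le (2^m)) hle).symm
    rw [Finset.sum_range_succ, ← ih, cnt_le_sum, cnt_le_sum, h2, hsplit,
      Finset.sum_Ico_eq_sum_range, Finset.sum_Ico_eq_sum_range, blk, Finset.card_filter]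
    simp

lemma lemA {u v : ℕ → Bool} (huv : u 0 = v 0) :
    EZ0 u v ↔ Tendsto (fun m => (blk u v m : ℝ) / 2 ^ m) atTop (nhds 0) := by
  have hEZ : EZ0 u v ↔ Tendsto (fun N => (cnt u v N : ℝ) / N) atTop (nhds 0) := Iff.rfl
  rw [hEZ]
  constructor
  · intro h
    have hpow : Tendsto (fun m : ℕ => 2 ^ (m+1)) atTop atTop := by
      refine tendsto_atTop_mono (fun m => ?_) tendsto_id
      calc (id m : ℕ) = m := rfl
        _ ≤ 2 ^ m := Nat.le_of_lt (Nat.lt_two_pow_self (n := m))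
        _ ≤ 2 ^ (m+1) := Nat.pow_le_pow_right (by norm_num) (by omega)
    have hcomp : Tendsto (fun m => (cnt u v (2 ^ (m+1)) : ℝ) / (2:ℝ) ^ (m+1))
        atTop (nhds 0) := by
      have := h.comp hpow
      refine this.congr fun m => ?_
      simp only [Function.comp_apply]
      push_cast
      ring
    refine squeeze_zero (fun m => by positivity) (fun m => ?_)
      (by simpa using hcomp.const_mul 2)
    have hble : (blk u v m : ℝ) ≤ (cnt u v (2 ^ (m+1)) : ℝ) := by
      have : blk u v m ≤ cnt u v (2 ^ (m+1)) := by
        rw [cnt_pow u v huv (m+1), Finset.sum_range_succ]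
        exact Nat.le_add_left _ _
      exact_mod_cast this
    have hpos : (0:ℝ) < 2 ^ m := by positivity
    calc (blk u v m : ℝ) / 2 ^ m ≤ (cnt u v (2 ^ (m+1)) : ℝ) / 2 ^ m := by gcongr
      _ = 2 * ((cnt u v (2 ^ (m+1)) : ℝ) / 2 ^ (m+1)) := by
          rw [pow_succ]; field_simp; ring
  · intro h
    have hlog : Tendsto (fun N : ℕ => Nat.log 2 N + 1) atTop atTop := by
      refine tendsto_atTop_atTop.2 fun b => ⟨2 ^ b, fun N hN => ?_⟩
      have : b ≤ Nat.log 2 N := Nat.le_log_of_pow_le (by norm_num) hN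
      omega
    have hg : Tendsto (fun N : ℕ =>
        2 * ((∑ i ∈ Finset.range (Nat.log 2 N + 1), (blk u v i : ℝ)) /
          2 ^ (Nat.log 2 N + 1))) atTop (nhds 0) := by
      have hga := geom_avg (a := fun i => (blk u v i : ℝ)) (fun i => by positivity) h
      have := (hga.comp hlog).const_mul 2
      simpa using this
    refine squeeze_zero' (Eventually.of_forall fun N => by positivity)
      ?_ hg
    refine eventually_atTop.2 ⟨1, fun N hN => ?_⟩
    have hN0 : N ≠ 0 := by omega
    have hup : N < 2 ^ (Nat.log 2 N + 1) := Nat.lt_pow_succ_log_self (by norm_num) N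
    have hlo : 2 ^ Nat.log 2 N ≤ N := Nat.pow_log_le_self 2 hN0
    have hcntle : (cnt u v N : ℝ) ≤ ∑ i ∈ Finset.range (Nat.log 2 N + 1), (blk u v i : ℝ) := by
      have : cnt u v N ≤ cnt u v (2 ^ (Nat.log 2 N + 1)) := cnt_mono u v hup.le
      rw [cnt_pow u v huv] at this
      calc (cnt u v N : ℝ) ≤ ((∑ i ∈ Finset.range (Nat.log 2 N + 1), blk u v i : ℕ) : ℝ) := by
            exact_mod_cast this
        _ = _ := by push_cast; rfl
    have hNpos : (0:ℝ) < N := by exact_mod_cast Nat.pos_of_ne_zero hN0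
    have hSnonneg : 0 ≤ ∑ i ∈ Finset.range (Nat.log 2 N + 1), (blk u v i : ℝ) :=
      Finset.sum_nonneg fun i _ => by positivity
    have hlor : (2:ℝ) ^ Nat.log 2 N ≤ N := by exact_mod_cast hlo
    calc (cnt u v N : ℝ) / N
        ≤ (∑ i ∈ Finset.range (Nat.log 2 N + 1), (blk u v i : ℝ)) / N := by gcongr
      _ ≤ (∑ i ∈ Finset.range (Nat.log 2 N + 1), (blk u v i : ℝ)) / 2 ^ Nat.log 2 N :=
          div_le_div_of_nonneg_left hSnonneg (by positivity) hlor
      _ = 2 * ((∑ i ∈ Finset.range (Nat.log 2 N + 1), (blk u v i : ℝ)) /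
          2 ^ (Nat.log 2 N + 1)) := by
          rw [pow_succ]; field_simp

end blocks
section window

/-- window function: clamp of `s - k` to `[0,1]` -/
noncomputable def wf (k : ℤ) (s : ℝ) : ℝ := min (max (s - k) 0) 1

lemma wf_nonneg (k : ℤ) (s : ℝ) : 0 ≤ wf k s := le_min (le_max_right _ _) zero_le_one

lemma wf_le_one (k : ℤ) (s : ℝ) : wf k s ≤ 1 := min_le_right _ _

lemma clamp_lip (a b : ℝ) : |min (max a 0) 1 - min (max b 0) 1| ≤ |a - b| := by
  have h1 := le_abs_self (a - b)
  have h2 := neg_abs_le (a - b)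
  rw [abs_le]
  constructor <;> simp only [min_def, max_def] <;> split_ifs <;> linarith

lemma wf_lip (k : ℤ) (s t : ℝ) : |wf k s - wf k t| ≤ |s - t| := by
  have := clamp_lip (s - k) (t - k)
  simpa [wf] using this

lemma wf_eq_of_le {k : ℤ} {s t : ℝ} (h1 : s ≤ k) (h2 : t ≤ k) : wf k s = wf k t := by
  rw [wf, wf, max_eq_right (by linarith : s - (k:ℝ) ≤ 0),
    max_eq_right (by linarith : t - (k:ℝ) ≤ 0)]

lemma wf_eq_of_ge {k : ℤ} {s t : ℝ} (h1 : (k:ℝ) + 1 ≤ s) (h2 : (k:ℝ) + 1 ≤ t) :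
    wf k s = wf k t := by
  rw [wf, wf, min_eq_right, min_eq_right]
  · exact le_max_of_le_left (by linarith)
  · exact le_max_of_le_left (by linarith)

lemma wf_sep_aux {s t : ℝ} (hst : s ≤ t) :
    ∃ k : ℤ, min (t - s) 1 / 2 ≤ wf k t - wf k s := by
  set u : ℝ := s - ⌊s⌋ with hu
  set v : ℝ := t - ⌊s⌋ with hv
  have hu0 : 0 ≤ u := by
    have := Int.floor_le s; rw [hu]; linarith
  have hu1 : u < 1 := by
    have := Int.lt_floor_add_one s; rw [hu]; linarith
  have huv : u ≤ v := by rw [hu, hv]; linarith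
  have hwfs : wf ⌊s⌋ s = u := by
    rw [wf, max_eq_left (by linarith), min_eq_left (by linarith)]
  rcases le_total v 1 with hv1 | hv1
  · refine ⟨⌊s⌋, ?_⟩
    have hwft : wf ⌊s⌋ t = v := by
      rw [wf, max_eq_left (by linarith), min_eq_left (by linarith)]
    rw [hwfs, hwft]
    have hmin : min (t - s) 1 ≤ t - s := min_le_left _ _
    have : v - u = t - s := by rw [hu, hv]; ring
    have hts : 0 ≤ t - s := by linarith
    linarith
  · -- v ≥ 1
    have hwft1 : wf ⌊s⌋ t = 1 := by
      rw [wf, min_eq_right]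
      exact le_max_of_le_left (by linarith)
    have hcast : ((⌊s⌋ + 1 : ℤ) : ℝ) = (⌊s⌋ : ℝ) + 1 := by push_cast; ring
    have hwfs2 : wf (⌊s⌋ + 1) s = 0 := by
      have hfl := Int.lt_floor_add_one s
      rw [wf, hcast, max_eq_right (by linarith : s - ((⌊s⌋:ℝ) + 1) ≤ 0),
        min_eq_left (by norm_num : (0:ℝ) ≤ 1)]
    have hwft2 : wf (⌊s⌋ + 1) t = min (v - 1) 1 := by
      have ht1 : t - ((⌊s⌋:ℝ) + 1) = v - 1 := by rw [hv]; ring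
      rw [wf, hcast, ht1, max_eq_left (by linarith : (0:ℝ) ≤ v - 1)]
    -- diff₀ = 1 - u, diff₁ = min (v-1) 1, diff₀ + diff₁ ≥ min (t-s) 1
    have hkey : min (t - s) 1 ≤ (1 - u) + min (v - 1) 1 := by
      rcases le_total (v - 1) 1 with h | h
      · rw [min_eq_left h]
        have hvu : v - u = t - s := by rw [hu, hv]; ring
        calc min (t - s) 1 ≤ t - s := min_le_left _ _
          _ = (1 - u) + (v - 1) := by linarith
      · rw [min_eq_right h]
        calc min (t - s) 1 ≤ 1 := min_le_right _ _
          _ ≤ (1 - u) + 1 := by linarith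
    rcases le_total (1 - u) (min (v - 1) 1) with hc | hc
    · refine ⟨⌊s⌋ + 1, ?_⟩
      rw [hwfs2, hwft2]
      linarith
    · refine ⟨⌊s⌋, ?_⟩
      rw [hwfs, hwft1]
      linarith

lemma wf_sep (s t : ℝ) : ∃ k : ℤ, min |s - t| 1 / 2 ≤ |wf k s - wf k t| := by
  rcases le_total s t with h | h
  · obtain ⟨k, hk⟩ := wf_sep_aux h
    refine ⟨k, ?_⟩
    rw [abs_sub_comm s t, abs_of_nonneg (by linarith : (0:ℝ) ≤ t - s), abs_sub_comm]
    calc min (t - s) 1 / 2 ≤ wf k t - wf k s := hk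
      _ ≤ |wf k t - wf k s| := le_abs_self _
  · obtain ⟨k, hk⟩ := wf_sep_aux h
    refine ⟨k, ?_⟩
    rw [abs_of_nonneg (by linarith : (0:ℝ) ≤ s - t)]
    calc min (s - t) 1 / 2 ≤ wf k s - wf k t := hk
      _ ≤ |wf k s - wf k t| := le_abs_self _

end window

section dir1

/-- enumeration of `ℕ × ℤ` -/
noncomputable def p1 : ℕ ≃ ℕ × ℤ := (Denumerable.eqv (ℕ × ℤ)).symm

/-- the reduction from `c0Rel` to `EZ0` -/
noncomputable def theta1 (x : ℕ → ℝ) (j : ℕ) : Bool :=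
  if j = 0 then false
  else decide (((j - 2 ^ Nat.log 2 j : ℕ) : ℝ) <
    wf (p1 (Nat.log 2 j)).2 (x (p1 (Nat.log 2 j)).1) * 2 ^ Nat.log 2 j)

noncomputable def e1 (x y : ℕ → ℝ) (m : ℕ) : ℝ :=
  |wf (p1 m).2 (x (p1 m).1) - wf (p1 m).2 (y (p1 m).1)|

lemma e1_nonneg (x y : ℕ → ℝ) (m : ℕ) : 0 ≤ e1 x y m := abs_nonneg _

lemma theta1_block (x : ℕ → ℝ) (m j : ℕ) (hj : j < 2 ^ m) :
    theta1 x (2 ^ m + j) = decide ((j : ℝ) < wf (p1 m).2 (x (p1 m).1) * 2 ^ m) := by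
  have h2m : 0 < 2 ^ m := pow_pos (by norm_num : (0:ℕ) < 2) m
  have hne : 2 ^ m + j ≠ 0 := by omega
  have hlog : Nat.log 2 (2 ^ m + j) = m :=
    Nat.log_eq_of_pow_le_of_lt_pow (Nat.le_add_right _ _) (by rw [pow_succ]; omega)
  simp only [theta1, if_neg hne, hlog, Nat.add_sub_cancel_left]

lemma card_thresh (L : ℕ) (a b : ℝ) (ha0 : 0 ≤ a) (haL : a ≤ L) (hb0 : 0 ≤ b)
    (hbL : b ≤ L) :
    abs ((((Finset.range L).filter
        (fun j : ℕ => decide ((j:ℝ) < a) ≠ decide ((j:ℝ) < b))).card : ℝ) - |a - b|) ≤ 2 := by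
  have hAL : ⌈a⌉₊ ≤ L := Nat.ceil_le.2 haL
  have hBL : ⌈b⌉₊ ≤ L := Nat.ceil_le.2 hbL
  have hfeq : (Finset.range L).filter (fun j : ℕ => decide ((j:ℝ) < a) ≠ decide ((j:ℝ) < b))
      = Finset.Ico (min ⌈a⌉₊ ⌈b⌉₊) (max ⌈a⌉₊ ⌈b⌉₊) := by
    ext j
    simp only [Finset.mem_filter, Finset.mem_range, Finset.mem_Ico, ne_eq,
      decide_eq_decide, ← Nat.lt_ceil]
    omega
  rw [hfeq, Nat.card_Ico]
  have hcast : ((max ⌈a⌉₊ ⌈b⌉₊ - min ⌈a⌉₊ ⌈b⌉₊ : ℕ) : ℝ) = |(⌈a⌉₊:ℝ) - (⌈b⌉₊:ℝ)| := by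
    rcases le_total (⌈a⌉₊ : ℕ) ⌈b⌉₊ with h | h
    · rw [max_eq_right h, min_eq_left h, Nat.cast_sub h, abs_sub_comm,
        abs_of_nonneg (sub_nonneg.2 (by exact_mod_cast h))]
    · rw [max_eq_left h, min_eq_right h, Nat.cast_sub h,
        abs_of_nonneg (sub_nonneg.2 (by exact_mod_cast h))]
  rw [hcast]
  have hA1 : |(⌈a⌉₊:ℝ) - a| ≤ 1 :=
    abs_le.2 ⟨by linarith [Nat.le_ceil a], by linarith [Nat.ceil_lt_add_one ha0]⟩
  have hB1 : |(⌈b⌉₊:ℝ) - b| ≤ 1 :=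
    abs_le.2 ⟨by linarith [Nat.le_ceil b], by linarith [Nat.ceil_lt_add_one hb0]⟩
  calc abs (|(⌈a⌉₊:ℝ) - (⌈b⌉₊:ℝ)| - |a - b|)
      ≤ |((⌈a⌉₊:ℝ) - (⌈b⌉₊:ℝ)) - (a - b)| := abs_abs_sub_abs_le_abs_sub _ _
    _ = |((⌈a⌉₊:ℝ) - a) + -((⌈b⌉₊:ℝ) - b)| := by ring_nf
    _ ≤ |(⌈a⌉₊:ℝ) - a| + |-((⌈b⌉₊:ℝ) - b)| := abs_add_le _ _
    _ ≤ 2 := by rw [abs_neg]; linarith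

lemma blk_theta1 (x y : ℕ → ℝ) (m : ℕ) :
    |(blk (theta1 x) (theta1 y) m : ℝ) / 2 ^ m - e1 x y m| ≤ 2 / 2 ^ m := by
  have h2m : (0:ℝ) < 2 ^ m := by positivity
  have hcast : ((2 ^ m : ℕ) : ℝ) = 2 ^ m := by push_cast; rfl
  set a := wf (p1 m).2 (x (p1 m).1) * 2 ^ m with ha
  set b := wf (p1 m).2 (y (p1 m).1) * 2 ^ m with hb
  have hblk : blk (theta1 x) (theta1 y) m
      = ((Finset.range (2^m)).filter
          (fun j : ℕ => decide ((j:ℝ) < a) ≠ decide ((j:ℝ) < b))).card := by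
    rw [blk]
    congr 1
    apply Finset.filter_congr
    intro j hj
    rw [theta1_block x m j (Finset.mem_range.1 hj), theta1_block y m j (Finset.mem_range.1 hj)]
  have hca := card_thresh (2^m) a b
    (by rw [ha]; exact mul_nonneg (wf_nonneg _ _) (by positivity))
    (by rw [ha, hcast]; nlinarith [wf_le_one (p1 m).2 (x (p1 m).1), wf_nonneg (p1 m).2 (x (p1 m).1)])
    (by rw [hb]; exact mul_nonneg (wf_nonneg _ _) (by positivity))
    (by rw [hb, hcast]; nlinarith [wf_le_one (p1 m).2 (y (p1 m).1), wf_nonneg (p1 m).2 (y (p1 m).1)])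
  have hab : |a - b| = e1 x y m * 2 ^ m := by
    rw [ha, hb, ← sub_mul, abs_mul, abs_of_pos h2m, e1]
  have hrw : (blk (theta1 x) (theta1 y) m : ℝ) / 2 ^ m - e1 x y m
      = ((blk (theta1 x) (theta1 y) m : ℝ) - |a - b|) / 2 ^ m := by
    rw [hab, sub_div, mul_div_assoc, div_self h2m.ne', mul_one]
  rw [hrw, abs_div, abs_of_pos h2m]
  gcongr
  rw [hblk]
  exact hca

lemma lemB (x y : ℕ → ℝ) : Tendsto (e1 x y) atTop (nhds 0) ↔ c0Rel x y := by
  constructor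
  · intro h
    rw [c0Rel, tend0_iff]
    intro ε hε
    have hε' : 0 < min ε 1 / 2 := div_pos (lt_min hε one_pos) two_pos
    have hev : ∀ᶠ m in atTop, |e1 x y m| < min ε 1 / 2 := tend0_iff.1 h _ hε'
    rw [← Nat.cofinite_eq_atTop, eventually_cofinite] at hev ⊢
    refine Set.Finite.subset (hev.image fun m => (p1 m).1) ?_
    intro n hn
    simp only [Set.mem_setOf_eq, not_lt] at hn
    obtain ⟨k, hk⟩ := wf_sep (x n) (y n)
    refine ⟨p1.symm (n, k), ?_, ?_⟩
    · simp only [Set.mem_setOf_eq, not_lt]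
      have he1 : e1 x y (p1.symm (n,k)) = |wf k (x n) - wf k (y n)| := by
        rw [e1, Equiv.apply_symm_apply]
      rw [abs_of_nonneg (e1_nonneg x y _), he1]
      calc min ε 1 / 2 ≤ min |x n - y n| 1 / 2 := by
            have := min_le_min hn (le_refl (1:ℝ))
            linarith
        _ ≤ |wf k (x n) - wf k (y n)| := hk
    · simp
  · intro h
    rw [tend0_iff]
    intro ε hε
    obtain ⟨N, hN⟩ := eventually_atTop.1 (tend0_iff.1 h ε hε)
    set B : ℝ := (∑ i ∈ Finset.range N, (|x i| + |y i|)) + 1 with hB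
    have hxB : ∀ n, n < N → |x n| ≤ B ∧ |y n| ≤ B := by
      intro n hn
      have hle : |x n| + |y n| ≤ ∑ i ∈ Finset.range N, (|x i| + |y i|) :=
        Finset.single_le_sum (f := fun i => |x i| + |y i|) (fun i _ => by positivity)
          (Finset.mem_range.2 hn)
      have h1 := abs_nonneg (x n)
      have h2 := abs_nonneg (y n)
      constructor <;> (rw [hB]; linarith)
    rw [← Nat.cofinite_eq_atTop, eventually_cofinite]
    have hfin : (↑(Finset.range N ×ˢ Finset.Icc (-⌈B⌉ - 1) ⌈B⌉) : Set (ℕ × ℤ)).Finite :=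
      Finset.finite_toSet _
    refine Set.Finite.subset (hfin.preimage p1.injective.injOn) ?_
    intro m hm
    simp only [Set.mem_setOf_eq, not_lt] at hm
    have he : ε ≤ |wf (p1 m).2 (x (p1 m).1) - wf (p1 m).2 (y (p1 m).1)| := by
      rw [abs_of_nonneg (e1_nonneg x y m), e1] at hm
      exact hm
    set n := (p1 m).1 with hn
    set k := (p1 m).2 with hk
    have hnN : n < N := by
      by_contra hge
      have h1 := hN n (le_of_not_gt hge)
      have h2 := wf_lip k (x n) (y n)
      linarith
    have hne : wf k (x n) ≠ wf k (y n) := by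
      intro hq
      rw [hq, sub_self, abs_zero] at he
      linarith
    have hklt : (k:ℝ) < max (x n) (y n) := by
      by_contra hge
      push_neg at hge
      exact hne (wf_eq_of_le (le_trans (le_max_left _ _) hge)
        (le_trans (le_max_right _ _) hge))
    have hkgt : min (x n) (y n) < (k:ℝ) + 1 := by
      by_contra hge
      push_neg at hge
      exact hne (wf_eq_of_ge (le_trans hge (min_le_left _ _))
        (le_trans hge (min_le_right _ _)))
    obtain ⟨hx, hy⟩ := hxB n hnN
    have h1 : k ≤ ⌈B⌉ := by
      have hkB : (k:ℝ) < B := lt_of_lt_of_le hklt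
        (max_le (by linarith [le_abs_self (x n)]) (by linarith [le_abs_self (y n)]))
      have h2 : (k:ℝ) < (⌈B⌉:ℝ) := lt_of_lt_of_le hkB (Int.le_ceil B)
      exact (Int.cast_lt.1 h2).le
    have h2 : -⌈B⌉ - 1 ≤ k := by
      have hminB : -B ≤ min (x n) (y n) :=
        le_min (by linarith [neg_abs_le (x n)]) (by linarith [neg_abs_le (y n)])
      have hcast : ((-⌈B⌉ - 1 : ℤ):ℝ) < k := by
        push_cast
        linarith [Int.le_ceil B]
      exact (Int.cast_lt.1 hcast).le
    simp only [Set.mem_preimage, Finset.coe_product, Set.mem_prod, Finset.mem_coe,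
      Finset.mem_range, Finset.mem_Icc]
    exact ⟨hnN, h2, h1⟩

lemma dir1_iff (x y : ℕ → ℝ) : c0Rel x y ↔ EZ0 (theta1 x) (theta1 y) := by
  have h00 : theta1 x 0 = theta1 y 0 := by simp [theta1]
  calc c0Rel x y ↔ Tendsto (e1 x y) atTop (nhds 0) := (lemB x y).symm
    _ ↔ Tendsto (fun m => (blk (theta1 x) (theta1 y) m : ℝ) / 2 ^ m) atTop (nhds 0) :=
        (tendsto_transfer (blk_theta1 x y) (tendsto_const_div_two_pow 2)).symm
    _ ↔ EZ0 (theta1 x) (theta1 y) := (lemA h00).symm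

end dir1
section dir2

/-- enumeration of `ℕ × Finset ℕ` -/
noncomputable def p2 : ℕ ≃ ℕ × Finset ℕ := (Denumerable.eqv (ℕ × Finset ℕ)).symm

/-- the reduction from `EZ0` to `c0Rel` -/
noncomputable def theta2 (x : ℕ → Bool) (m : ℕ) : ℝ :=
  if (p2 m).2 ⊆ Finset.range (p2 m).1 then
    (∑ i ∈ Finset.range (p2 m).1,
      if x i ≠ decide (i ∈ (p2 m).2) then (1:ℝ) else 0) / ((p2 m).1 : ℝ)
  else 0

/-- normalized Hamming distance of initial segments -/
noncomputable def ds (x y : ℕ → Bool) (n : ℕ) : ℝ :=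
  (∑ i ∈ Finset.range n, if x i ≠ y i then (1:ℝ) else 0) / (n : ℝ)

lemma ds_nonneg (x y : ℕ → Bool) (n : ℕ) : 0 ≤ ds x y n := by
  refine div_nonneg (Finset.sum_nonneg fun i _ => ?_) (by positivity)
  split_ifs <;> norm_num

lemma EZ0_iff_ds (x y : ℕ → Bool) : EZ0 x y ↔ Tendsto (ds x y) atTop (nhds 0) := by
  have hfe : (fun n : ℕ =>
      (((Finset.range n).filter (fun m => x m ≠ y m)).card : ℝ) / (n : ℝ)) = ds x y := by
    funext n
    rw [ds, Finset.card_filter]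
    push_cast
    rfl
  rw [EZ0, hfe]

lemma theta2_diff_le (x y : ℕ → Bool) (m : ℕ) :
    |theta2 x m - theta2 y m| ≤ ds x y (p2 m).1 := by
  rw [theta2, theta2]
  split_ifs with hg
  · rcases Nat.eq_zero_or_pos (p2 m).1 with h0 | h0
    · simp [h0, ds]
    · have hnpos : (0:ℝ) < ((p2 m).1 : ℝ) := by exact_mod_cast h0
      rw [div_sub_div_same, abs_div, abs_of_pos hnpos, ds]
      have hnum : |(∑ i ∈ Finset.range (p2 m).1,
            if x i ≠ decide (i ∈ (p2 m).2) then (1:ℝ) else 0)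
          - ∑ i ∈ Finset.range (p2 m).1,
            if y i ≠ decide (i ∈ (p2 m).2) then (1:ℝ) else 0|
          ≤ ∑ i ∈ Finset.range (p2 m).1, if x i ≠ y i then (1:ℝ) else 0 := by
        rw [← Finset.sum_sub_distrib]
        refine (Finset.abs_sum_le_sum_abs _ _).trans (Finset.sum_le_sum fun i _ => ?_)
        by_cases hxy : x i = y i
        · simp [hxy]
        · rw [if_pos hxy]
          split_ifs <;> norm_num
      exact (div_le_div_iff_of_pos_right hnpos).2 hnum
  · simpa [ds] using ds_nonneg x y (p2 m).1

lemma dir2_iff (x y : ℕ → Bool) : EZ0 x y ↔ c0Rel (theta2 x) (theta2 y) := by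
  rw [EZ0_iff_ds]
  constructor
  · intro hd
    rw [c0Rel, tend0_iff]
    intro ε hε
    obtain ⟨N, hN⟩ := eventually_atTop.1 (tend0_iff.1 hd ε hε)
    rw [← Nat.cofinite_eq_atTop, eventually_cofinite]
    have hfin : (↑(Finset.range N ×ˢ (Finset.range N).powerset) :
        Set (ℕ × Finset ℕ)).Finite := Finset.finite_toSet _
    refine Set.Finite.subset (hfin.preimage p2.injective.injOn) ?_
    intro m hm
    simp only [Set.mem_setOf_eq, not_lt] at hm
    have hle := theta2_diff_le x y m
    have hnN : (p2 m).1 < N := by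
      by_contra hge
      have h1 := hN (p2 m).1 (le_of_not_gt hge)
      rw [abs_of_nonneg (ds_nonneg x y _)] at h1
      linarith
    have hsub : (p2 m).2 ⊆ Finset.range (p2 m).1 := by
      by_contra hns
      rw [theta2, theta2, if_neg hns, if_neg hns, sub_self, abs_zero] at hm
      linarith
    simp only [Set.mem_preimage, Finset.coe_product, Set.mem_prod, Finset.mem_coe,
      Finset.mem_range, Finset.mem_powerset]
    exact ⟨hnN, hsub.trans (Finset.range_subset_range.2 hnN.le)⟩
  · intro hc
    set mf : ℕ → ℕ :=
      fun n => p2.symm (n, (Finset.range n).filter (fun i => y i = true)) with hmf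
    have hinj : Function.Injective mf := by
      intro a b hab
      have h := congrArg (fun m => (p2 m).1) hab
      simpa [hmf] using h
    have hkey : ∀ n, ds x y n = |theta2 x (mf n) - theta2 y (mf n)| := by
      intro n
      have hp : p2 (mf n) = (n, (Finset.range n).filter (fun i => y i = true)) := by
        rw [hmf]; exact Equiv.apply_symm_apply _ _
      have hsub : ((Finset.range n).filter (fun i => y i = true)) ⊆ Finset.range n :=
        Finset.filter_subset _ _
      have hdec : ∀ i ∈ Finset.range n,
          (decide (i ∈ (Finset.range n).filter (fun i => y i = true)) : Bool) = y i := by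
        intro i hi
        cases hy : y i
        · simp [Finset.mem_filter, hi, hy]
        · simp [Finset.mem_filter, hi, hy]
      have hty : theta2 y (mf n) = 0 := by
        rw [theta2, hp]
        simp only
        rw [if_pos hsub]
        have : ∀ i ∈ Finset.range n,
            (if y i ≠ decide (i ∈ (Finset.range n).filter (fun i => y i = true))
              then (1:ℝ) else 0) = 0 := by
          intro i hi
          rw [hdec i hi]
          simp
        rw [Finset.sum_congr rfl this]
        simp
      have htx : theta2 x (mf n) = ds x y n := by
        rw [theta2, hp]
        simp only
        rw [if_pos hsub, ds]
        congr 1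
        refine Finset.sum_congr rfl fun i hi => ?_
        rw [hdec i hi]
      rw [htx, hty, sub_zero, abs_of_nonneg (ds_nonneg x y n)]
    have habs : Tendsto (fun m => |theta2 x m - theta2 y m|) atTop (nhds 0) := by
      have h := hc.abs
      simpa using h
    have hcomp := habs.comp hinj.nat_tendsto_atTop
    refine hcomp.congr fun n => ?_
    simp only [Function.comp_apply]
    exact (hkey n).symm

end dir2
section meas

lemma measurable_decide {α : Type*} [MeasurableSpace α] {p : α → Prop} [∀ a, Decidable (p a)]
    (hp : MeasurableSet {a | p a}) : Measurable fun a => decide (p a) := by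
  have h : (fun a => decide (p a)) = fun a => if p a then true else false := by
    funext a; by_cases h : p a <;> simp [h]
  rw [h]
  exact Measurable.ite hp measurable_const measurable_const

lemma wf_continuous (k : ℤ) : Continuous (wf k) := by
  unfold wf
  exact ((continuous_id.sub continuous_const).max continuous_const).min continuous_const

lemma theta1_measurable : Measurable fun x : ℕ → ℝ => theta1 x := by
  apply measurable_pi_lambda
  intro j
  by_cases hj : j = 0
  · subst hj
    simp only [theta1, if_pos rfl]
    exact measurable_const
  · simp only [theta1, if_neg hj]
    refine measurable_decide ?_
    refine measurableSet_lt measurable_const ?_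
    exact (((wf_continuous (p1 (Nat.log 2 j)).2).measurable).comp
      (measurable_pi_apply _)).mul measurable_const

lemma theta2_measurable : Measurable fun x : ℕ → Bool => theta2 x := by
  apply measurable_pi_lambda
  intro m
  by_cases hg : (p2 m).2 ⊆ Finset.range (p2 m).1
  · simp only [theta2, if_pos hg]
    apply Measurable.div_const
    apply Finset.measurable_sum
    intro i _
    have h : (fun x : ℕ → Bool => if x i ≠ decide (i ∈ (p2 m).2) then (1:ℝ) else 0) =
        (fun b : Bool => if b ≠ decide (i ∈ (p2 m).2) then (1:ℝ) else 0) ∘ (fun x => x i) :=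
      rfl
    rw [h]
    exact measurable_from_top.comp (measurable_pi_apply i)
  · simp only [theta2, if_neg hg]
    exact measurable_const

end meas



end C0EZ0Aux

/-- Oliver: `c₀` and `E_{Z₀}` are Borel bireducible. -/
theorem c0_bireducible_with_density_zero :
    BorelReducible c0Rel EZ0 ∧ BorelReducible EZ0 c0Rel := by
  constructor
  · refine ⟨theta1, ?_, fun x x' => dir1_iff x x'⟩
    rw [← BorelSpace.measurable_eq (α := ℕ → ℝ), ← BorelSpace.measurable_eq (α := ℕ → Bool)]
    exact theta1_measurable
  · refine ⟨theta2, ?_, fun x x' => dir2_iff x x'⟩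
    rw [← BorelSpace.measurable_eq (α := ℕ → Bool), ← BorelSpace.measurable_eq (α := ℕ → ℝ)]
    exact theta2_measurable
end

section
/- Let r : ℕ → ℝ satisfy r(n) ≥ 0 for all n, r(n) → 0 as n → ∞, and ∑_n r(n) = ∞. Then the summable equivalence relation E_{S_r} is Borel bireducible with ℓ¹ (both E_{S_r} ≤B ℓ¹ and ℓ¹ ≤B E_{S_r}). In particular, E₂ is Borel bireducible with ℓ¹. -/
open Filter

/-- The summable equivalence relation `E_{S_r}` on `2^ℕ` (subsets of `ℕ` identified
with characteristic functions): `x ∼ y` iff `∑_{n ∈ x Δ y} r n < ∞`. -/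
def EsumRel (r : ℕ → ℝ) (x y : ℕ → Bool) : Prop :=
  Summable (fun n : ℕ => if x n = y n then (0 : ℝ) else r n)

/-- The `ℓ¹` equivalence relation on `ℝ^ℕ`: `x ∼ y` iff `∑ₙ |x n − y n| < ∞`. -/
def l1Rel (x y : ℕ → ℝ) : Prop :=
  Summable (fun n : ℕ => |x n - y n|)

/-- `E₂`: `x E₂ y` iff `∑_{n ∈ x Δ y} 1/(n+1) < ∞`. -/
def E2 (x y : ℕ → Bool) : Prop :=
  Summable (fun n : ℕ => if x n = y n then (0 : ℝ) else 1 / (n + 1))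

namespace Stmt18
noncomputable section
open scoped Classical ENNReal

variable {r : ℕ → ℝ}

def dl (k : ℕ) : ℝ := (1/2)^k

lemma dl_pos (k : ℕ) : 0 < dl k := by unfold dl; positivity

structure Hyp (r : ℕ → ℝ) : Prop where
  nonneg : ∀ n, 0 ≤ r n
  lim : Tendsto r atTop (nhds 0)
  div : ¬ Summable r

lemma summable_dl4 : Summable (fun k => 4 * dl k) :=
  (summable_geometric_of_lt_one (by norm_num) (by norm_num)).mul_left 4

lemma exists_NN (hr : Hyp r) (k : ℕ) :
    ∃ N, ∀ n ≥ N, r n ≤ dl k := by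
  obtain ⟨N, hN⟩ := (Metric.tendsto_atTop.mp hr.lim) (dl k) (dl_pos k)
  exact ⟨N, fun n hn => le_of_lt (lt_of_le_of_lt (le_abs_self _) (by simpa [Real.dist_eq] using hN n hn))⟩

def NN (hr : Hyp r) (k : ℕ) : ℕ := (exists_NN hr k).choose

lemma NN_spec (hr : Hyp r) (k : ℕ) :
    ∀ n ≥ NN hr k, r n ≤ dl k := (exists_NN hr k).choose_spec

lemma exists_big (hr : Hyp r) (u : Finset ℕ) (N : ℕ) (C : ℝ) :
    ∃ m, C ≤ ∑ n ∈ (Finset.range (m+1)).filter (fun n => n ∉ u ∧ N ≤ n), r n := by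
  set f : ℕ → ℝ := fun n => if n ∉ u ∧ N ≤ n then r n else 0 with hf
  have hfnn : ∀ n, 0 ≤ f n := by
    intro n; simp only [hf]; split <;> simp [hr.nonneg n]
  have hfdiv : ¬ Summable f := by
    intro hs
    apply hr.div
    have hg : Summable (fun n => if n ∉ u ∧ N ≤ n then 0 else r n) := by
      apply summable_of_ne_finset_zero (s := u ∪ Finset.range N)
      intro n hn
      simp only [Finset.mem_union, Finset.mem_range, not_or, not_lt] at hn
      simp [hn.1, hn.2]
    have := hs.add hg
    refine this.congr ?_
    intro n; by_cases h : n ∉ u ∧ N ≤ n <;> simp [hf, h]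
  have := (not_summable_iff_tendsto_nat_atTop_of_nonneg hfnn).mp hfdiv
  obtain ⟨m, hm⟩ := (this.eventually_ge_atTop C).exists
  refine ⟨m, ?_⟩
  calc C ≤ ∑ i ∈ Finset.range m, f i := hm
    _ ≤ ∑ i ∈ Finset.range (m+1), f i := by
        apply Finset.sum_le_sum_of_subset_of_nonneg (Finset.range_subset_range.2 (Nat.le_succ m))
        intro i _ _; exact hfnn i
    _ = _ := by rw [Finset.sum_filter]

/-- The chunk carved out of fresh indices `∉ u`, all `≥ NN (unpair c).1`, with
`r`-sum in `[dl k, 2 * dl k]`. -/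
def chunkM (hr : Hyp r) (c : ℕ) (u : Finset ℕ) : ℕ :=
  Nat.find (exists_big hr u (NN hr c.unpair.1) (dl c.unpair.1))

def chunk (hr : Hyp r) (c : ℕ) (u : Finset ℕ) : Finset ℕ :=
  (Finset.range (chunkM hr c u + 1)).filter (fun n => n ∉ u ∧ NN hr c.unpair.1 ≤ n)

lemma chunk_disj (hr : Hyp r) (c : ℕ) (u : Finset ℕ) :
    ∀ n ∈ chunk hr c u, n ∉ u := by
  intro n hn; exact ((Finset.mem_filter.mp hn).2).1

lemma chunk_sum_lb (hr : Hyp r) (c : ℕ) (u : Finset ℕ) :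
    dl c.unpair.1 ≤ ∑ n ∈ chunk hr c u, r n :=
  Nat.find_spec (exists_big hr u (NN hr c.unpair.1) (dl c.unpair.1))

lemma chunk_sum_ub (hr : Hyp r) (c : ℕ) (u : Finset ℕ) :
    ∑ n ∈ chunk hr c u, r n ≤ 2 * dl c.unpair.1 := by
  obtain ⟨m, hm⟩ : ∃ m, chunkM hr c u = m := ⟨_, rfl⟩
  set k := c.unpair.1 with hk
  set N := NN hr k with hN
  have hchunk : chunk hr c u = (Finset.range (m+1)).filter (fun n => n ∉ u ∧ N ≤ n) := by
    rw [chunk, hm]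
  rcases Nat.eq_zero_or_pos m with h0 | hpos
  · subst h0
    rw [hchunk]
    by_cases h : 0 ∉ u ∧ N ≤ 0
    · rw [show (Finset.range 1).filter (fun n => n ∉ u ∧ N ≤ n) = {0} by
        ext n; simp only [Finset.mem_filter, Finset.mem_range, Nat.lt_one_iff, Finset.mem_singleton]
        constructor
        · rintro ⟨h1, _⟩; exact h1
        · rintro rfl; exact ⟨rfl, h⟩]
      have : r 0 ≤ dl k := NN_spec hr k 0 h.2
      simp only [Finset.sum_singleton]
      nlinarith [dl_pos k]
    · rw [show (Finset.range 1).filter (fun n => n ∉ u ∧ N ≤ n) = ∅ by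
        ext n; simp only [Finset.mem_filter, Finset.mem_range, Nat.lt_one_iff, Finset.notMem_empty, iff_false]
        rintro ⟨rfl, h2⟩; exact h h2]
      simp only [Finset.sum_empty]
      nlinarith [dl_pos k]
  · have hmin := Nat.find_min (exists_big hr u N (dl k)) (m := m - 1)
      (by rw [show Nat.find (exists_big hr u N (dl k)) = m from hm]; omega)
    push_neg at hmin
    have hlt : ∑ n ∈ (Finset.range m).filter (fun n => n ∉ u ∧ N ≤ n), r n < dl k := by
      have : m - 1 + 1 = m := by omega
      rwa [this] at hmin
    have hsplit : ∑ n ∈ (Finset.range (m+1)).filter (fun n => n ∉ u ∧ N ≤ n), r n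
        = ∑ n ∈ (Finset.range m).filter (fun n => n ∉ u ∧ N ≤ n), r n
          + (if m ∉ u ∧ N ≤ m then r m else 0) := by
      rw [Finset.sum_filter, Finset.sum_filter, Finset.sum_range_succ]
    have hrm : (if m ∉ u ∧ N ≤ m then r m else 0) ≤ dl k := by
      split_ifs with h
      · exact NN_spec hr k m h.2
      · exact le_of_lt (dl_pos k)
    rw [hchunk, hsplit]
    linarith

def used (hr : Hyp r) : ℕ → Finset ℕ
  | 0 => ∅
  | c+1 => used hr c ∪ chunk hr c (used hr c)

def blk (hr : Hyp r) (c : ℕ) : Finset ℕ := chunk hr c (used hr c)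

lemma used_mono (hr : Hyp r) : Monotone (used hr) := by
  apply monotone_nat_of_le_succ
  intro c; exact Finset.subset_union_left

lemma blk_subset_used_succ (hr : Hyp r) (c : ℕ) : blk hr c ⊆ used hr (c+1) :=
  Finset.subset_union_right

lemma blk_disjoint (hr : Hyp r) {c c' : ℕ} (h : c ≠ c') :
    ∀ n, n ∈ blk hr c → n ∉ blk hr c' := by
  wlog hlt : c < c' generalizing c c'
  · intro n h1 h2; exact this h.symm (by omega) n h2 h1
  intro n h1 h2
  have : n ∈ used hr c' := used_mono hr (by omega : c + 1 ≤ c') (blk_subset_used_succ hr c h1)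
  exact chunk_disj hr c' (used hr c') n h2 this

def w (hr : Hyp r) (c : ℕ) : ℝ := ∑ n ∈ blk hr c, r n

lemma w_lb (hr : Hyp r) (c : ℕ) : dl c.unpair.1 ≤ w hr c := chunk_sum_lb hr c _
lemma w_ub (hr : Hyp r) (c : ℕ) : w hr c ≤ 2 * dl c.unpair.1 := chunk_sum_ub hr c _
lemma w_nonneg (hr : Hyp r) (c : ℕ) : 0 ≤ w hr c := le_trans (le_of_lt (dl_pos _)) (w_lb hr c)

lemma ofReal_sum (s : Finset ℕ) (f : ℕ → ℝ) (h : ∀ n ∈ s, 0 ≤ f n) :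
    ENNReal.ofReal (∑ n ∈ s, f n) = ∑ n ∈ s, ENNReal.ofReal (f n) := by
  induction s using Finset.induction with
  | empty => simp
  | insert a t hx ih =>
      rw [Finset.sum_insert hx, Finset.sum_insert hx,
        ENNReal.ofReal_add (h a (by simp)) (Finset.sum_nonneg fun i hi => h i (by simp [hi])),
        ih (fun i hi => h i (by simp [hi]))]

lemma summable_iff_ne_top (f : ℕ → ℝ) (hf : ∀ n, 0 ≤ f n) :
    Summable f ↔ ∑' n, ENNReal.ofReal (f n) ≠ ⊤ := by
  constructor
  · intro h
    rw [← ENNReal.ofReal_tsum_of_nonneg hf h]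
    exact ENNReal.ofReal_ne_top
  · intro h
    have := ENNReal.summable_toReal h
    refine this.congr fun n => ?_
    rw [ENNReal.toReal_ofReal (hf n)]

def W (hr : Hyp r) (k M : ℕ) : ℝ := ∑ i ∈ Finset.range M, w hr (Nat.pair k i)

lemma W_mono (hr : Hyp r) (k : ℕ) : Monotone (W hr k) := by
  intro a b hab
  apply Finset.sum_le_sum_of_subset_of_nonneg (Finset.range_subset_range.2 hab)
  intro i _ _; exact w_nonneg hr _

lemma W_lb (hr : Hyp r) (k M : ℕ) : (M : ℝ) * dl k ≤ W hr k M := by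
  calc (M : ℝ) * dl k = ∑ _i ∈ Finset.range M, dl k := by
        rw [Finset.sum_const, nsmul_eq_mul, Finset.card_range]
    _ ≤ W hr k M := by
        apply Finset.sum_le_sum
        intro i _
        have := w_lb hr (Nat.pair k i)
        rwa [Nat.unpair_pair] at this

lemma exists_M (hr : Hyp r) (k : ℕ) (t : ℝ) : ∃ M : ℕ, t ≤ W hr k M := by
  obtain ⟨M, hM⟩ := exists_nat_ge (t / dl k)
  refine ⟨M, ?_⟩
  have h1 : t ≤ M * dl k := by
    rw [div_le_iff₀ (dl_pos k)] at hM
    linarith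
  exact h1.trans (W_lb hr k M)

def Mok (hr : Hyp r) (k : ℕ) (t : ℝ) : ℕ := Nat.find (exists_M hr k t)

lemma Mok_mono (hr : Hyp r) (k : ℕ) : Monotone (Mok hr k) := by
  intro t s hts
  exact Nat.find_mono (fun M hM => le_trans hts hM)

lemma le_W_Mok (hr : Hyp r) (k : ℕ) (t : ℝ) : t ≤ W hr k (Mok hr k t) :=
  Nat.find_spec (exists_M hr k t)

lemma W_Mok_le (hr : Hyp r) (k : ℕ) {t : ℝ} (ht : 0 ≤ t) :
    W hr k (Mok hr k t) ≤ t + 2 * dl k := by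
  obtain ⟨M, hM⟩ : ∃ M, Mok hr k t = M := ⟨_, rfl⟩
  rcases Nat.eq_zero_or_pos M with h0 | hpos
  · rw [hM, h0]
    simp only [W, Finset.range_zero, Finset.sum_empty]
    nlinarith [dl_pos k]
  · have hmin := Nat.find_min (exists_M hr k t) (m := M - 1)
      (by rw [show Nat.find (exists_M hr k t) = M from hM]; omega)
    push_neg at hmin
    have hwub : w hr (Nat.pair k (M-1)) ≤ 2 * dl k := by
      simpa using w_ub hr (Nat.pair k (M-1))
    have hsum : W hr k ((M-1)+1) = W hr k (M-1) + w hr (Nat.pair k (M-1)) :=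
      Finset.sum_range_succ _ _
    rw [show M - 1 + 1 = M by omega] at hsum
    rw [hM]
    linarith

/-- The per-coordinate nonnegative values to encode: block `2j` holds `(x j)⁺`,
block `2j+1` holds `(x j)⁻`. -/
def T (x : ℕ → ℝ) (b : ℕ) : ℝ :=
  if b % 2 = 0 then max (x (b / 2)) 0 else max (-(x (b / 2))) 0

lemma T_nonneg (x : ℕ → ℝ) (b : ℕ) : 0 ≤ T x b := by
  rw [T]; split <;> exact le_max_right _ _

lemma T_even (x : ℕ → ℝ) (j : ℕ) : T x (2 * j) = max (x j) 0 := by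
  rw [T]; norm_num [Nat.mul_div_cancel_left j (by norm_num : 0 < 2)]

lemma T_odd (x : ℕ → ℝ) (j : ℕ) : T x (2 * j + 1) = max (-(x j)) 0 := by
  have h1 : (2 * j + 1) % 2 = 1 := by omega
  have h2 : (2 * j + 1) / 2 = j := by omega
  rw [T, h1, h2]; norm_num

/-- The reduction map from `ℝ^ℕ` to `2^ℕ`. -/
def theta (hr : Hyp r) (x : ℕ → ℝ) (n : ℕ) : Bool :=
  if ∃ c : ℕ, n ∈ blk hr c ∧ c.unpair.2 < Mok hr c.unpair.1 (T x c.unpair.1)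
  then true else false

lemma theta_mem (hr : Hyp r) (x : ℕ → ℝ) {n c : ℕ} (hn : n ∈ blk hr c) :
    theta hr x n = true ↔ c.unpair.2 < Mok hr c.unpair.1 (T x c.unpair.1) := by
  rw [theta]
  split_ifs with h
  · simp only [true_iff]
    obtain ⟨c', hc1, hc2⟩ := h
    rcases eq_or_ne c' c with rfl | hne
    · exact hc2
    · exact absurd hn (blk_disjoint hr hne n hc1)
  · simp only [false_iff]
    intro hc
    exact h ⟨c, hn, hc⟩

lemma theta_not_mem (hr : Hyp r) (x : ℕ → ℝ) {n : ℕ} (hn : ∀ c, n ∉ blk hr c) :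
    theta hr x n = false := by
  rw [theta]
  split_ifs with h
  · obtain ⟨c, hc, _⟩ := h; exact absurd hc (hn c)
  · rfl

lemma abs_split (a b : ℝ) :
    |a - b| = |max a 0 - max b 0| + |max (-a) 0 - max (-b) 0| := by
  rcases le_total 0 a with ha | ha <;> rcases le_total 0 b with hb | hb
  · rw [max_eq_left ha, max_eq_left hb, max_eq_right (neg_nonpos.mpr ha),
      max_eq_right (neg_nonpos.mpr hb)]
    simp
  · rw [max_eq_left ha, max_eq_right hb, max_eq_right (neg_nonpos.mpr ha),
      max_eq_left (neg_nonneg.mpr hb)]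
    rw [abs_of_nonneg (by linarith), abs_of_nonneg (by linarith), abs_of_nonpos (by linarith)]
    ring
  · rw [max_eq_right ha, max_eq_left hb, max_eq_left (neg_nonneg.mpr ha),
      max_eq_right (neg_nonpos.mpr hb)]
    rw [abs_of_nonpos (by linarith), abs_of_nonpos (by linarith), abs_of_nonneg (by linarith)]
    ring
  · rw [max_eq_right ha, max_eq_right hb, max_eq_left (neg_nonneg.mpr ha),
      max_eq_left (neg_nonneg.mpr hb)]
    simp only [sub_zero, zero_sub]
    rw [show (-a - -b) = -(a - b) by ring, abs_neg]
    simp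

lemma key (hr : Hyp r) (x y : ℕ → ℝ) :
    EsumRel r (theta hr x) (theta hr y) ↔ l1Rel x y := by
  set Mx : ℕ → ℕ := fun k => Mok hr k (T x k) with hMx
  set My : ℕ → ℕ := fun k => Mok hr k (T y k) with hMy
  set G : ℕ → ℝ≥0∞ := fun n =>
    if theta hr x n = theta hr y n then 0 else ENNReal.ofReal (r n) with hG
  set H : ℕ → ℝ≥0∞ := fun c =>
    if ((c.unpair.2 < Mx c.unpair.1) ↔ (c.unpair.2 < My c.unpair.1)) then 0
    else ENNReal.ofReal (w hr c) with hH
  set D : ℕ → ℝ := fun k => |W hr k (Mx k) - W hr k (My k)| with hD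
  set d : ℕ → ℝ := fun k => |T x k - T y k| with hd
  -- Step A
  have stepA : EsumRel r (theta hr x) (theta hr y) ↔ ∑' n, G n ≠ ⊤ := by
    have hnn : ∀ n, 0 ≤ (if theta hr x n = theta hr y n then (0:ℝ) else r n) := by
      intro n; split
      · exact le_refl 0
      · exact hr.nonneg n
    rw [EsumRel, summable_iff_ne_top _ hnn]
    have : ∀ n, ENNReal.ofReal (if theta hr x n = theta hr y n then (0:ℝ) else r n) = G n := by
      intro n
      show _ = (if theta hr x n = theta hr y n then 0 else ENNReal.ofReal (r n))
      split <;> simp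
    rw [tsum_congr this]
  -- Step B
  have stepB : ∑' n, G n = ∑' c, H c := by
    have hpt : ∀ n, G n = ∑' c, (if n ∈ blk hr c then G n else 0) := by
      intro n
      by_cases hex : ∃ c, n ∈ blk hr c
      · obtain ⟨c₀, hc₀⟩ := hex
        rw [tsum_eq_single c₀ (fun c' hc' => ?_), if_pos hc₀]
        rw [if_neg]
        exact fun hmem => hc' (by
          by_contra hne
          exact blk_disjoint hr hne n hmem hc₀)
      · push_neg at hex
        have hGn : G n = 0 := by
          rw [hG]; dsimp only
          rw [theta_not_mem hr x hex, theta_not_mem hr y hex]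
          simp
        rw [hGn]
        simp only [hGn, ite_self, tsum_zero]
    calc ∑' n, G n = ∑' n, ∑' c, (if n ∈ blk hr c then G n else 0) := tsum_congr hpt
      _ = ∑' c, ∑' n, (if n ∈ blk hr c then G n else 0) := ENNReal.tsum_comm
      _ = ∑' c, H c := by
          refine tsum_congr fun c => ?_
          rw [tsum_eq_sum (s := blk hr c) (fun n hn => if_neg hn)]
          have hval : ∀ n ∈ blk hr c, (if n ∈ blk hr c then G n else 0) = G n := by
            intro n hn; rw [if_pos hn]
          rw [Finset.sum_congr rfl hval, hH]
          dsimp only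
          by_cases hiff : (c.unpair.2 < Mx c.unpair.1) ↔ (c.unpair.2 < My c.unpair.1)
          · rw [if_pos hiff]
            apply Finset.sum_eq_zero
            intro n hn
            show (if theta hr x n = theta hr y n then 0 else ENNReal.ofReal (r n)) = 0
            rw [if_pos]
            rw [Bool.eq_iff_iff, theta_mem hr x hn, theta_mem hr y hn]
            exact hiff
          · rw [if_neg hiff]
            have : ∀ n ∈ blk hr c, G n = ENNReal.ofReal (r n) := by
              intro n hn
              show (if theta hr x n = theta hr y n then 0 else ENNReal.ofReal (r n)) = ENNReal.ofReal (r n)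
              rw [if_neg]
              rw [Bool.eq_iff_iff, theta_mem hr x hn, theta_mem hr y hn]
              exact hiff
            rw [Finset.sum_congr rfl this, w, ofReal_sum _ _ (fun n _ => hr.nonneg n)]
  -- Step C
  have stepC : ∑' c, H c = ∑' k, ENNReal.ofReal (D k) := by
    rw [← Nat.pairEquiv.tsum_eq H]
    have : ∀ p : ℕ × ℕ, H (Nat.pairEquiv p) = H (Nat.pair p.1 p.2) := fun p => rfl
    rw [tsum_congr this]
    rw [ENNReal.tsum_prod (f := fun a b => H (Nat.pair a b))]
    refine tsum_congr fun k => ?_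
    have hHp : ∀ i : ℕ, H (Nat.pair k i)
        = if ((i < Mx k) ↔ (i < My k)) then 0 else ENNReal.ofReal (w hr (Nat.pair k i)) := by
      intro i; rw [hH]; dsimp only; rw [Nat.unpair_pair]
    rw [tsum_congr hHp]
    set a := min (Mx k) (My k) with ha
    set b := max (Mx k) (My k) with hb
    have houtside : ∀ i ∉ Finset.Ico a b,
        (if ((i < Mx k) ↔ (i < My k)) then 0 else ENNReal.ofReal (w hr (Nat.pair k i))) = 0 := by
      intro i hi
      rw [Finset.mem_Ico, not_and_or, not_lt, not_le] at hi
      rw [if_pos]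
      rcases hi with hi | hi
      · -- i < a : both true
        constructor <;> intro _ <;> omega
      · -- b ≤ i : both false
        constructor <;> intro h <;> omega
    rw [tsum_eq_sum houtside]
    have hinside : ∀ i ∈ Finset.Ico a b,
        (if ((i < Mx k) ↔ (i < My k)) then 0 else ENNReal.ofReal (w hr (Nat.pair k i)))
        = ENNReal.ofReal (w hr (Nat.pair k i)) := by
      intro i hi
      rw [Finset.mem_Ico] at hi
      rw [if_neg]
      intro hiff
      rw [ha, hb] at hi
      rcases le_total (Mx k) (My k) with h | h
      · rw [min_eq_left h, max_eq_right h] at hi; omega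
      · rw [min_eq_right h, max_eq_left h] at hi; omega
    rw [Finset.sum_congr rfl hinside,
      ← ofReal_sum (Finset.Ico a b) (fun i => w hr (Nat.pair k i)) (fun n _ => w_nonneg hr _)]
    congr 1
    rw [Finset.sum_Ico_eq_sub _ (min_le_max)]
    have hDk : D k = W hr k b - W hr k a := by
      rw [hD, ha, hb]; dsimp only
      rcases le_total (Mx k) (My k) with h | h
      · rw [inf_eq_left.mpr h, sup_eq_right.mpr h,
          abs_of_nonpos (by linarith [W_mono hr k h] : W hr k (Mx k) - W hr k (My k) ≤ 0)]
        ring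
      · rw [inf_eq_right.mpr h, sup_eq_left.mpr h,
          abs_of_nonneg (by linarith [W_mono hr k h] : 0 ≤ W hr k (Mx k) - W hr k (My k))]
    rw [hDk]
    simp only [W]
    rfl
  -- Step D : per-k estimate
  have stepD : ∀ k, D k ≤ d k + 4 * dl k ∧ d k ≤ D k + 4 * dl k := by
    intro k
    have htx := T_nonneg x k
    have hty := T_nonneg y k
    have h1 := le_W_Mok hr k (T x k)
    have h2 := W_Mok_le hr k htx
    have h3 := le_W_Mok hr k (T y k)
    have h4 := W_Mok_le hr k hty
    have key1 : |(W hr k (Mx k) - W hr k (My k)) - (T x k - T y k)| ≤ 4 * dl k := by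
      have e1 : W hr k (Mx k) - T x k ≤ 2 * dl k := by simp only [hMx]; linarith
      have e1' : 0 ≤ W hr k (Mx k) - T x k := by simp only [hMx]; linarith
      have e2 : W hr k (My k) - T y k ≤ 2 * dl k := by simp only [hMy]; linarith
      have e2' : 0 ≤ W hr k (My k) - T y k := by simp only [hMy]; linarith
      rw [abs_le]; constructor <;> linarith
    have key2 : |D k - d k| ≤ 4 * dl k := by
      refine le_trans ?_ key1
      rw [hD, hd]; dsimp only
      exact abs_abs_sub_abs_le_abs_sub _ _
    rw [abs_le] at key2
    constructor <;> linarith [key2.1, key2.2]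
  -- Step E : comparison of the two series
  have hdl0 : ∀ k, (0:ℝ) ≤ 4 * dl k := fun k => by nlinarith [dl_pos k]
  have hdlC : ∑' k, ENNReal.ofReal (4 * dl k) ≠ ⊤ :=
    (summable_iff_ne_top _ hdl0).mp summable_dl4
  have hDnn : ∀ k, 0 ≤ D k := fun k => abs_nonneg _
  have hdnn : ∀ k, 0 ≤ d k := fun k => abs_nonneg _
  have cmp : ∀ (u v : ℕ → ℝ), (∀ k, 0 ≤ v k) → (∀ k, u k ≤ v k + 4 * dl k) →
      ∑' k, ENNReal.ofReal (u k) ≤ ∑' k, ENNReal.ofReal (v k) + ∑' k, ENNReal.ofReal (4 * dl k) := by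
    intro u v hv huv
    rw [← ENNReal.tsum_add]
    apply ENNReal.tsum_le_tsum
    intro k
    calc ENNReal.ofReal (u k) ≤ ENNReal.ofReal (v k + 4 * dl k) := ENNReal.ofReal_le_ofReal (huv k)
      _ = ENNReal.ofReal (v k) + ENNReal.ofReal (4 * dl k) := ENNReal.ofReal_add (hv k) (by nlinarith [dl_pos k])
  have stepE : (∑' k, ENNReal.ofReal (D k) ≠ ⊤) ↔ (∑' k, ENNReal.ofReal (d k) ≠ ⊤) := by
    constructor
    · intro h
      have := cmp d D hDnn (fun k => (stepD k).2)
      intro htop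
      rw [htop] at this
      exact (ENNReal.add_ne_top.mpr ⟨h, hdlC⟩) (top_le_iff.mp this)
    · intro h
      have := cmp D d hdnn (fun k => (stepD k).1)
      intro htop
      rw [htop] at this
      exact (ENNReal.add_ne_top.mpr ⟨h, hdlC⟩) (top_le_iff.mp this)
  -- Step F : regrouping by parity
  have stepF : ∑' k, ENNReal.ofReal (d k) = ∑' j, ENNReal.ofReal (|x j - y j|) := by
    rw [← tsum_even_add_odd (f := fun k => ENNReal.ofReal (d k)) ENNReal.summable ENNReal.summable]
    rw [← ENNReal.tsum_add]
    refine tsum_congr fun j => ?_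
    rw [hd]; dsimp only
    rw [T_even, T_even, T_odd, T_odd,
      ← ENNReal.ofReal_add (abs_nonneg _) (abs_nonneg _)]
    congr 1
    exact (abs_split (x j) (y j)).symm
  -- Step G
  have stepG : l1Rel x y ↔ ∑' j, ENNReal.ofReal (|x j - y j|) ≠ ⊤ :=
    summable_iff_ne_top _ (fun n => abs_nonneg _)
  rw [stepA, stepB, stepC, stepE, stepF, stepG]

lemma measurable_MokT (hr : Hyp r) (k : ℕ) :
    Measurable (fun x : ℕ → ℝ => Mok hr k (T x k)) := by
  have h1 : Measurable (fun x : ℕ → ℝ => T x k) := by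
    unfold T
    split_ifs
    · exact (measurable_pi_apply _).max measurable_const
    · exact (measurable_pi_apply _).neg.max measurable_const
  exact ((Mok_mono hr k).measurable).comp h1

lemma theta_measurable (hr : Hyp r) : Measurable (theta hr) := by
  apply measurable_pi_lambda
  intro n
  have heq : (fun x : ℕ → ℝ => theta hr x n)
      = fun x => if x ∈ {x : ℕ → ℝ |
          ∃ c : ℕ, n ∈ blk hr c ∧ c.unpair.2 < Mok hr c.unpair.1 (T x c.unpair.1)}
        then true else false := rfl
  rw [heq]
  have hset : MeasurableSet {x : ℕ → ℝ |
      ∃ c : ℕ, n ∈ blk hr c ∧ c.unpair.2 < Mok hr c.unpair.1 (T x c.unpair.1)} := by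
    have : {x : ℕ → ℝ |
        ∃ c : ℕ, n ∈ blk hr c ∧ c.unpair.2 < Mok hr c.unpair.1 (T x c.unpair.1)}
        = ⋃ c : ℕ, {x : ℕ → ℝ | n ∈ blk hr c ∧ c.unpair.2 < Mok hr c.unpair.1 (T x c.unpair.1)} := by
      ext x; simp [Set.mem_iUnion]
    rw [this]
    apply MeasurableSet.iUnion
    intro c
    by_cases hc : n ∈ blk hr c
    · have : {x : ℕ → ℝ | n ∈ blk hr c ∧ c.unpair.2 < Mok hr c.unpair.1 (T x c.unpair.1)}
          = (fun x : ℕ → ℝ => Mok hr c.unpair.1 (T x c.unpair.1)) ⁻¹' (Set.Ioi c.unpair.2) := by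
        ext x; simp [hc]
      rw [this]
      exact (measurable_MokT hr _) measurableSet_Ioi
    · have : {x : ℕ → ℝ | n ∈ blk hr c ∧ c.unpair.2 < Mok hr c.unpair.1 (T x c.unpair.1)} = ∅ := by
        ext x; simp [hc]
      rw [this]
      exact MeasurableSet.empty
  exact Measurable.ite hset measurable_const measurable_const

/-- Building a Borel reduction from a measurable map w.r.t. canonical instances. -/
lemma borelReducible_of_measurable {X Y : Type*} [TopologicalSpace X] [mX : MeasurableSpace X]
    [BorelSpace X] [TopologicalSpace Y] [mY : MeasurableSpace Y] [BorelSpace Y]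
    {E : X → X → Prop} {F : Y → Y → Prop} (f : X → Y) (hf : Measurable f)
    (h : ∀ x x', E x x' ↔ F (f x) (f x')) :
    ∃ θ : X → Y, @Measurable X Y (borel X) (borel Y) θ ∧ ∀ x x' : X, E x x' ↔ F (θ x) (θ x') := by
  refine ⟨f, ?_, h⟩
  rw [← BorelSpace.measurable_eq (α := X), ← BorelSpace.measurable_eq (α := Y)]
  exact hf

/-- Direction A: the easy reduction. -/
lemma dirA (hr : Hyp r) :
    ∃ θ : (ℕ → Bool) → (ℕ → ℝ), @Measurable _ _ (borel (ℕ → Bool)) (borel (ℕ → ℝ)) θ ∧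
      ∀ x x', EsumRel r x x' ↔ l1Rel (θ x) (θ x') := by
  apply borelReducible_of_measurable (fun x n => if x n = true then r n else 0)
  · apply measurable_pi_lambda
    intro n
    have : (fun x : ℕ → Bool => if x n = true then r n else 0)
        = (fun b : Bool => if b = true then r n else 0) ∘ (fun x => x n) := rfl
    rw [this]
    exact (Measurable.of_discrete).comp (measurable_pi_apply n)
  · intro x x'
    rw [EsumRel, l1Rel]
    apply summable_congr
    intro n
    rcases Bool.eq_false_or_eq_true (x n) with h1 | h1 <;>
      rcases Bool.eq_false_or_eq_true (x' n) with h2 | h2 <;>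
        simp [h1, h2, abs_of_nonneg (hr.nonneg n)]

/-- Direction B: the hard reduction. -/
lemma dirB (hr : Hyp r) :
    ∃ θ : (ℕ → ℝ) → (ℕ → Bool), @Measurable _ _ (borel (ℕ → ℝ)) (borel (ℕ → Bool)) θ ∧
      ∀ x x', l1Rel x x' ↔ EsumRel r (θ x) (θ x') := by
  apply borelReducible_of_measurable (theta hr) (theta_measurable hr)
  intro x x'
  exact (key hr x x').symm

end
end Stmt18

/-- Kechris: if `r : ℕ → ℝ` is nonnegative, tends to `0`, and
`∑ₙ r n = ∞`, then `E_{S_r}` is Borel bireducible with `ℓ¹`; in particular `E₂`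
is Borel bireducible with `ℓ¹`. -/
theorem summable_bireducible_with_l1
    (r : ℕ → ℝ) (hr0 : ∀ n, 0 ≤ r n)
    (hrlim : Tendsto r atTop (nhds 0))
    (hrdiv : ¬ Summable r) :
    (BorelReducible (EsumRel r) l1Rel ∧ BorelReducible l1Rel (EsumRel r)) ∧
    (BorelReducible E2 l1Rel ∧ BorelReducible l1Rel E2) := by
  have main : ∀ (r : ℕ → ℝ), (∀ n, 0 ≤ r n) → Tendsto r atTop (nhds 0) → ¬ Summable r →
      BorelReducible (EsumRel r) l1Rel ∧ BorelReducible l1Rel (EsumRel r) := by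
    intro r h0 hl hd
    have hr : Stmt18.Hyp r := ⟨h0, hl, hd⟩
    exact ⟨Stmt18.dirA hr, Stmt18.dirB hr⟩
  have h0' : ∀ n : ℕ, (0:ℝ) ≤ 1 / ((n:ℝ) + 1) := fun n => by positivity
  have hl' : Tendsto (fun n : ℕ => 1 / ((n:ℝ) + 1)) atTop (nhds 0) :=
    tendsto_one_div_add_atTop_nhds_zero_nat
  have hd' : ¬ Summable (fun n : ℕ => 1 / ((n:ℝ) + 1)) := by
    intro h
    have h2 : Summable (fun n : ℕ => 1 / ((↑(n+1) : ℝ))) := h.congr fun n => by push_cast; ring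
    exact Real.not_summable_one_div_natCast ((summable_nat_add_iff 1).mp h2)
  have hE2 : E2 = EsumRel (fun n : ℕ => 1 / ((n:ℝ) + 1)) := rfl
  have h2 := main (fun n : ℕ => 1 / ((n:ℝ) + 1)) h0' hl' hd'
  rw [hE2]
  exact ⟨main r hr0 hrlim hrdiv, h2⟩
end

section
/- E₃ is not Borel reducible to ℓ∞. -/
/-- `E₃`: componentwise eventual equality on `(2^ℕ)^ℕ`. -/
def E3 (x y : ℕ → ℕ → Bool) : Prop := ∀ k : ℕ, {n : ℕ | x k n ≠ y k n}.Finite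

/-!
Suppose `θ` reduces `E₃` to `ℓ∞`. Let `g : ℕ → ℤ` act on `(2^ℕ)^ℕ` by flipping, in every
column `k`, the bits at positions `n < g k` (below, `g • x` is `flipAt (segments g) x`). The
action preserves `E₃`, so `‖θ x - θ (g • x)‖∞` is finite for every `(x, g)`, and by the Baire
category theorem it is bounded by some `C` on a set that is comeagre in a basic open box. The
box constrains only finitely many columns of `g`, so it is invariant under translating `g` in
some free column `K`; hence a generic `(x, g)` satisfies the bound `C` for every translate
`g + N • e_K`, while `θ` is continuous at all points involved. As `N → ∞` the points
`(g + N • e_K) • x` converge to the point `y` that agrees with `g • x` outside column `K` and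
with the complement of `x` in column `K`. Thus `‖θ x - θ y‖∞ ≤ C`, although `x` and `y` differ
at every position of column `K`.
-/

open Set Filter Topology

section Baire

variable {α β : Type*} [TopologicalSpace α] [TopologicalSpace β]

theorem Measurable.exists_mem_residual_continuousOn [MeasurableSpace α] [BorelSpace α]
    [MeasurableSpace β] [BorelSpace β] [SecondCountableTopology β] {f : α → β}
    (hf : Measurable f) : ∃ D ∈ residual α, ContinuousOn f D := by
  obtain ⟨b, hbc, -, hb⟩ := TopologicalSpace.exists_countable_basis β
  have : ∀ t : b, ∃ u : Set α, IsOpen u ∧ f ⁻¹' t =ᵇ u := fun t =>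
    (hf (hb.isOpen t.2).measurableSet).residualEq_isOpen
  choose u hu hfu using this
  have := hbc.to_subtype
  -- on `D`, the preimage of each basic open set `t` coincides with the open set `u t`
  refine ⟨⋂ t : b, {x | (x ∈ f ⁻¹' t) = (x ∈ u t)}, countable_iInter_mem.2 hfu, ?_⟩
  intro x hx
  rw [ContinuousWithinAt, hb.nhds_hasBasis.tendsto_right_iff]
  rintro t ⟨htb, hxt⟩
  have hmem : ∀ y ∈ ⋂ t : b, {x | (x ∈ f ⁻¹' t) = (x ∈ u t)}, (y ∈ f ⁻¹' t) ↔ y ∈ u ⟨t, htb⟩ :=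
    fun y hy => (mem_iInter.1 hy ⟨t, htb⟩).to_iff
  filter_upwards [inter_mem_nhdsWithin _ ((hu ⟨t, htb⟩).mem_nhds ((hmem x hx).1 hxt)),
    self_mem_nhdsWithin] with y hy hyD
  exact (hmem y hyD).2 hy.2

theorem BaireMeasurableSet.exists_isOpen_eventually_residual {s : Set α}
    (hs : BaireMeasurableSet s) (h : ¬ IsMeagre s) :
    ∃ u, IsOpen u ∧ u.Nonempty ∧ ∀ᶠ x in residual α, x ∈ u → x ∈ s := by
  obtain ⟨u, hu, hsu⟩ := hs.residualEq_isOpen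
  refine ⟨u, hu, nonempty_iff_ne_empty.2 ?_, hsu.mono fun x hx => hx.symm.to_iff.1⟩
  rintro rfl
  exact h (hsu.mono fun x hx => hx.to_iff.1)

theorem exists_not_isMeagre_of_iUnion_eq_univ [BaireSpace α] [Nonempty α] {ι : Type*}
    [Countable ι] {s : ι → Set α} (hs : ⋃ i, s i = univ) : ∃ i, ¬ IsMeagre (s i) := by
  by_contra! h
  exact not_isMeagre_of_mem_residual univ_mem (hs ▸ isMeagre_iUnion h)

theorem Filter.Eventually.exists_mem_of_residual [BaireSpace α] {p : α → Prop}
    (hp : ∀ᶠ x in residual α, p x) {u : Set α} (hu : IsOpen u) (hne : u.Nonempty) :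
    ∃ x ∈ u, p x := by
  obtain ⟨x, hxu, hx⟩ := (dense_of_mem_residual hp).inter_open_nonempty u hu hne
  exact ⟨x, hxu, hx⟩

theorem IsOpenMap.of_isOpenMap_prodMk_right {γ : Type*} [TopologicalSpace γ] {f : α × β → γ}
    (hf : ∀ b, IsOpenMap fun a => f (a, b)) : IsOpenMap f := by
  intro w hw
  have : f '' w = ⋃ b, (fun a => f (a, b)) '' {a | (a, b) ∈ w} := by
    ext; simp [exists_comm (α := α)]
  rw [this]
  exact isOpen_iUnion fun b => hf b _ (hw.preimage (.prodMk_left b))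

end Baire

theorem exists_isOpen_subset_forall_add_single_mem_iff {α ι M : Type*} [TopologicalSpace α]
    [TopologicalSpace M] [Infinite ι] [DecidableEq ι] [AddZeroClass M]
    {u : Set (α × (ι → M))} (hu : IsOpen u) (hne : u.Nonempty) :
    ∃ K, ∃ W ⊆ u, IsOpen W ∧ W.Nonempty ∧
      ∀ (c : M) (p : α × (ι → M)), (p.1, p.2 + Pi.single K c) ∈ W ↔ p ∈ W := by
  obtain ⟨⟨a, g⟩, hp⟩ := hne
  obtain ⟨u₁, u₂, hu₁, hu₂, ha, hg, hsub⟩ := isOpen_prod_iff.1 hu a g hp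
  obtain ⟨I, v, hv, hIv⟩ := isOpen_pi_iff.1 hu₂ g hg
  obtain ⟨K, hK⟩ := Infinite.exists_notMem_finset I
  refine ⟨K, u₁ ×ˢ (I : Set ι).pi v, fun p hp => hsub ⟨hp.1, hIv hp.2⟩,
    hu₁.prod (isOpen_set_pi I.finite_toSet fun k hk => (hv k hk).1),
    ⟨(a, g), ha, fun k hk => (hv k hk).2⟩, fun c p => ?_⟩
  have : ∀ k ∈ I, (p.2 + Pi.single K c : ι → M) k = p.2 k := fun k hk => by
    simp [show k ≠ K by rintro rfl; exact hK hk]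
  simp +contextual only [mem_prod, Set.mem_pi, Finset.mem_coe, this]

def flipAt (s x : ℕ → ℕ → Bool) : ℕ → ℕ → Bool := fun k n => xor (s k n) (x k n)

theorem flipAt_flipAt (s x : ℕ → ℕ → Bool) : flipAt s (flipAt s x) = x := by
  funext k n; simp [flipAt]

theorem continuous_flipAt :
    Continuous fun p : (ℕ → ℕ → Bool) × (ℕ → ℕ → Bool) => flipAt p.1 p.2 := by
  refine continuous_pi fun k => continuous_pi fun n => ?_
  have hbit : Continuous fun x : ℕ → ℕ → Bool => x k n := by fun_prop
  exact (continuous_of_discreteTopology (f := fun b : Bool × Bool => xor b.1 b.2)).comp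
    ((hbit.comp continuous_fst).prodMk (hbit.comp continuous_snd))

theorem tendsto_flipAt_residual {G : Type*} [TopologicalSpace G] {F : G → ℕ → ℕ → Bool}
    (hF : Continuous F) :
    Tendsto (fun p : (ℕ → ℕ → Bool) × G => flipAt (F p.2) p.1) (residual _) (residual _) := by
  refine tendsto_residual_of_isOpenMap
    (continuous_flipAt.comp ((hF.comp continuous_snd).prodMk continuous_fst))
    (IsOpenMap.of_isOpenMap_prodMk_right fun g => ?_)
  have hc : Continuous (flipAt (F g)) :=
    continuous_flipAt.comp (continuous_const.prodMk continuous_id)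
  exact .of_inverse hc (fun x => flipAt_flipAt _ x) (fun x => flipAt_flipAt _ x)

def segments (g : ℕ → ℤ) : ℕ → ℕ → Bool := fun k n => decide ((n : ℤ) < g k)

theorem continuous_segments : Continuous segments :=
  continuous_pi fun k => continuous_pi fun n =>
    (continuous_of_discreteTopology (f := fun z : ℤ => decide ((n : ℤ) < z))).comp
      (continuous_apply k)

theorem E3_flipAt_segments (g : ℕ → ℤ) (x : ℕ → ℕ → Bool) : E3 x (flipAt (segments g) x) := by
  intro k
  refine (finite_Iio (g k).toNat).subset fun n hn => ?_
  by_contra h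
  rw [mem_Iio, Int.lt_toNat, not_lt] at h
  exact hn (by simp [flipAt, segments, not_lt.2 h])

theorem tendsto_segments_add_single (g : ℕ → ℤ) (K : ℕ) :
    Tendsto (fun N : ℕ => segments (g + Pi.single K (N : ℤ))) atTop
      (𝓝 (Function.update (segments g) K fun _ => true)) := by
  refine tendsto_pi_nhds.2 fun k => tendsto_pi_nhds.2 fun n => tendsto_nhds_of_eventually_eq ?_
  rcases eq_or_ne k K with rfl | hk
  · filter_upwards [tendsto_natCast_atTop_atTop.eventually_gt_atTop ((n : ℤ) - g k)] with N hN
    simp [segments]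
    omega
  · simp [segments, hk]

theorem not_E3_flipAt_update_true (s x : ℕ → ℕ → Bool) (K : ℕ) :
    ¬ E3 x (flipAt (Function.update s K fun _ => true) x) := fun h =>
  infinite_univ (by simpa [flipAt] using h K)

theorem isClosed_setOf_forall_abs_sub_le {ι : Type*} (C : ℝ) :
    IsClosed {z : (ι → ℝ) × (ι → ℝ) | ∀ i, |z.1 i - z.2 i| ≤ C} := by
  simp only [ofPred_forall]
  exact isClosed_iInter fun i => isClosed_le (by fun_prop) continuous_const

def boundedFlips (θ : (ℕ → ℕ → Bool) → ℕ → ℝ) (C : ℝ) : Set ((ℕ → ℕ → Bool) × (ℕ → ℤ)) :=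
  {p | ∀ n, |θ p.1 n - θ (flipAt (segments p.2) p.1) n| ≤ C}

theorem measurableSet_boundedFlips {θ : (ℕ → ℕ → Bool) → ℕ → ℝ} (hθ : Measurable θ) (C : ℝ) :
    MeasurableSet (boundedFlips θ C) := by
  have hflip : Continuous fun p : (ℕ → ℕ → Bool) × (ℕ → ℤ) => flipAt (segments p.2) p.1 :=
    continuous_flipAt.comp ((continuous_segments.comp continuous_snd).prodMk continuous_fst)
  exact ((hθ.comp measurable_fst).prodMk (hθ.comp hflip.measurable))
    (isClosed_setOf_forall_abs_sub_le C).measurableSet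

theorem iUnion_boundedFlips_eq_univ {θ : (ℕ → ℕ → Bool) → ℕ → ℝ}
    (hθ : ∀ x y, E3 x y → linftyRel (θ x) (θ y)) : ⋃ m : ℕ, boundedFlips θ m = univ := by
  refine eq_univ_of_forall fun ⟨x, g⟩ => ?_
  obtain ⟨C, hC⟩ := hθ _ _ (E3_flipAt_segments g x)
  obtain ⟨m, hm⟩ := exists_nat_ge C
  exact mem_iUnion.2 ⟨m, fun n => (hC n).trans hm⟩

theorem exists_not_E3_of_eventually_mem_boundedFlips {θ : (ℕ → ℕ → Bool) → ℕ → ℝ}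
    {D : Set (ℕ → ℕ → Bool)} (hD : D ∈ residual _) (hθD : ContinuousOn θ D)
    {u : Set ((ℕ → ℕ → Bool) × (ℕ → ℤ))} (hu : IsOpen u) (hne : u.Nonempty) {C : ℝ}
    (hC : ∀ᶠ p in residual _, p ∈ u → p ∈ boundedFlips θ C) :
    ∃ x y, (∀ n, |θ x n - θ y n| ≤ C) ∧ ¬ E3 x y := by
  obtain ⟨K, W, hWu, hW, hWne, hWinv⟩ := exists_isOpen_subset_forall_add_single_mem_iff hu hne
  let shift (N : ℕ) (p : (ℕ → ℕ → Bool) × (ℕ → ℤ)) := (p.1, p.2 + Pi.single K (N : ℤ))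
  have hshift (N : ℕ) : Tendsto (shift N) (residual _) (residual _) :=
    ((Homeomorph.refl _).prodCongr (Homeomorph.addRight _)).residual_map_eq.le
  have hgeneric : ∀ᶠ p in residual _, p ∈ W → (∀ N, shift N p ∈ boundedFlips θ C) ∧
      (∀ N, flipAt (segments (shift N p).2) p.1 ∈ D) ∧
      flipAt (Function.update (segments p.2) K fun _ => true) p.1 ∈ D := by
    have h₁ (N : ℕ) : ∀ᶠ p in residual _, p ∈ W → shift N p ∈ boundedFlips θ C :=
      ((hshift N).eventually (hC.mono fun p hp hpW => hp (hWu hpW))).mono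
        fun p hp hpW => hp ((hWinv _ p).2 hpW)
    have h₂ (N : ℕ) : ∀ᶠ p in residual _, flipAt (segments (shift N p).2) p.1 ∈ D :=
      tendsto_flipAt_residual (continuous_segments.comp (continuous_add_const _)) hD
    have h₃ : ∀ᶠ p : (ℕ → ℕ → Bool) × (ℕ → ℤ) in residual _,
        flipAt (Function.update (segments p.2) K fun _ => true) p.1 ∈ D :=
      tendsto_flipAt_residual (continuous_segments.update K continuous_const) hD
    filter_upwards [eventually_countable_forall.2 h₁, eventually_countable_forall.2 h₂, h₃]
      with p hp₁ hp₂ hp₃ hpW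
    exact ⟨fun N => hp₁ N hpW, hp₂, hp₃⟩
  obtain ⟨⟨x, g⟩, hpW, hgen⟩ := hgeneric.exists_mem_of_residual hW hWne
  obtain ⟨hbound, hseqD, hlimD⟩ := hgen hpW
  refine ⟨x, _, ?_, not_E3_flipAt_update_true (segments g) x K⟩
  have hseq := (continuous_flipAt.tendsto _).comp
    ((tendsto_segments_add_single g K).prodMk_nhds (tendsto_const_nhds (x := x)))
  have hlim := (hθD _ hlimD).tendsto.comp
    (tendsto_nhdsWithin_iff.2 ⟨hseq, .of_forall hseqD⟩)
  exact (isClosed_setOf_forall_abs_sub_le C).mem_of_tendsto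
    (tendsto_const_nhds.prodMk_nhds hlim) (.of_forall hbound)

/-- `E₃` is not Borel reducible to `ℓ∞`. -/
theorem E3_not_reducible_to_linfty : ¬ BorelReducible E3 linftyRel := by
  rintro ⟨θ, hθ, hθE⟩
  replace hθ : Measurable θ := by
    rwa [BorelSpace.measurable_eq (α := ℕ → ℕ → Bool), BorelSpace.measurable_eq (α := ℕ → ℝ)]
  obtain ⟨D, hD, hθD⟩ := hθ.exists_mem_residual_continuousOn
  obtain ⟨C, hC⟩ := exists_not_isMeagre_of_iUnion_eq_univ
    (iUnion_boundedFlips_eq_univ fun x y => (hθE x y).1)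
  obtain ⟨u, hu, hne, hCu⟩ :=
    (measurableSet_boundedFlips hθ C).baireMeasurableSet.exists_isOpen_eventually_residual hC
  obtain ⟨x, y, hxy, hnot⟩ := exists_not_E3_of_eventually_mem_boundedFlips hD hθD hu hne hCu
  exact hnot ((hθE x y).2 ⟨C, hxy⟩)
end
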